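/- arXiv:2103.14809 — 7 statements merged into one kernel-verified Lean document; each statement's English description precedes it below -/
import Mathlib

section
/- Let R be a φ-ring. Then R is nonnil-coherent if and only if for every finitely generated ideal I of R and every non-nilpotent element b ∈ R, the colon ideal (I :_R b) = {x ∈ R : xb ∈ I} is a finitely generated ideal of R. -/
open CategoryTheory

universe u

/-- A commutative ring is a `φ`-ring if its nilradical is a divided prime ideal. -/
def IsPhiRing (R : Type u) [CommRing R] : Prop :=
  (nilradical R).IsPrime ∧ ∀ x : R, x ∉ nilradical R → nilradical R ≤ Ideal.span {x}

/-- A ring is nonnil-coherent if every finitely generated nonnil ideal is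
finitely presented as a module. -/
def IsNonnilCoherent (R : Type u) [CommRing R] : Prop :=
  ∀ I : Ideal R, I.FG → ¬ I ≤ nilradical R → Module.FinitePresentation R I

/-- A module is φ-torsion if every element is annihilated by a nonnil ideal. -/
def IsPhiTorsion (R : Type u) [CommRing R] (T : Type u) [AddCommGroup T] [Module R T] : Prop :=
  ∀ t : T, ∃ I : Ideal R, ¬ I ≤ nilradical R ∧ ∀ a ∈ I, a • t = 0

/-- A module `M` is φ-flat if `Tor₁ᴿ(T, M) = 0` for every φ-torsion module `T`. -/
def IsPhiFlat (R : Type u) [CommRing R] (M : Type u) [AddCommGroup M] [Module R M] : Prop :=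
  ∀ (T : Type u) [AddCommGroup T] [Module R T], IsPhiTorsion R T →
    Subsingleton (((Tor (ModuleCat.{u} R) 1).obj (ModuleCat.of R T)).obj (ModuleCat.of R M))

/-- A module `M` is nonnil-injective if `Ext¹ᴿ(T, M) = 0` for every φ-torsion module `T`. -/
def IsNonnilInjective (R : Type u) [CommRing R] (M : Type u) [AddCommGroup M] [Module R M] :
    Prop :=
  ∀ (T : Type u) [AddCommGroup T] [Module R T], IsPhiTorsion R T →
    Subsingleton (((Ext R (ModuleCat.{u} R) 1).obj (Opposite.op (ModuleCat.of R T))).obj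
      (ModuleCat.of R M))

/-- A module `M` is nonnil-FP-injective if `Ext¹ᴿ(T, M) = 0` for every finitely
presented φ-torsion module `T`. -/
def IsNonnilFPInjective (R : Type u) [CommRing R] (M : Type u) [AddCommGroup M] [Module R M] :
    Prop :=
  ∀ (T : Type u) [AddCommGroup T] [Module R T], Module.FinitePresentation R T →
    IsPhiTorsion R T →
    Subsingleton (((Ext R (ModuleCat.{u} R) 1).obj (Opposite.op (ModuleCat.of R T))).obj
      (ModuleCat.of R M))

/-! For `J = N ⊔ R ∙ m`, the map `r ↦ r • m` gives short exact sequences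
`0 → (N : m) → R → J ⧸ N → 0` and `0 → N → J → J ⧸ N → 0`. If `N` is finitely generated and `J`
finitely presented, then `J ⧸ N` is finitely presented and so `(N : m)` is finitely generated;
conversely, if `N` is finitely presented and `(N : m)` finitely generated, then `J ⧸ N`, hence `J`,
is finitely presented. In a φ-ring the nilradical lies in the principal ideal of every
non-nilpotent element, so a nonnil finitely generated ideal is generated by its non-nilpotent
generators, and adding these to `⊥` one at a time keeps the ideal finitely presented. -/

namespace Submodule

variable {R M : Type*} [CommRing R] [AddCommGroup M] [Module R M] (N : Submodule R M) (m : M)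

noncomputable def toQuotientSupSpanSingleton :
    R →ₗ[R] ↥(N ⊔ span R {m}) ⧸ N.comap (N ⊔ span R {m}).subtype :=
  (N.comap (N ⊔ span R {m}).subtype).mkQ ∘ₗ
    LinearMap.toSpanSingleton R _ ⟨m, mem_sup_right (mem_span_singleton_self m)⟩

theorem toQuotientSupSpanSingleton_surjective :
    Function.Surjective (N.toQuotientSupSpanSingleton m) := by
  intro q
  obtain ⟨⟨x, hx⟩, rfl⟩ := mkQ_surjective _ q
  obtain ⟨n, hn, y, hy, rfl⟩ := mem_sup.mp hx
  obtain ⟨r, rfl⟩ := mem_span_singleton.mp hy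
  refine ⟨r, (Quotient.eq _).mpr ?_⟩
  simpa using neg_mem hn

theorem ker_toQuotientSupSpanSingleton :
    LinearMap.ker (N.toQuotientSupSpanSingleton m) = N.colon (span R {m}) := by
  ext r
  simp [toQuotientSupSpanSingleton, Quotient.mk_eq_zero]

variable {N m}

theorem colon_fg_of_finitePresentation_sup (hN : N.FG)
    [Module.FinitePresentation R ↥(N ⊔ span R {m})] : (N.colon (span R {m})).FG := by
  have : Module.Finite R N := Module.Finite.iff_fg.mpr hN
  have hN' : (N.comap (N ⊔ span R {m}).subtype).FG := Module.Finite.iff_fg.mp <|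
    Module.Finite.equiv (comapSubtypeEquivOfLe le_sup_left).symm
  have := Module.finitePresentation_of_surjective _
    (N.comap (N ⊔ span R {m}).subtype).mkQ_surjective (by rwa [ker_mkQ])
  rw [← ker_toQuotientSupSpanSingleton]
  exact Module.FinitePresentation.fg_ker _ (toQuotientSupSpanSingleton_surjective N m)

theorem finitePresentation_sup_of_colon_fg [Module.FinitePresentation R N]
    (h : (N.colon (span R {m})).FG) : Module.FinitePresentation R ↥(N ⊔ span R {m}) := by
  have := Module.finitePresentation_of_surjective _
    (toQuotientSupSpanSingleton_surjective N m) (by rwa [ker_toQuotientSupSpanSingleton])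
  have : Module.FinitePresentation R (LinearMap.ker (N.comap (N ⊔ span R {m}).subtype).mkQ) := by
    rw [ker_mkQ]
    exact .of_equiv (comapSubtypeEquivOfLe le_sup_left).symm
  exact Module.finitePresentation_of_ker _ (N.comap (N ⊔ span R {m}).subtype).mkQ_surjective

end Submodule

theorem Ideal.finitePresentation_span_of_forall_colon_fg {R : Type*} [CommRing R] (t : Finset R)
    (ht : ∀ x ∈ t, ∀ I : Ideal R, I.FG → (I.colon (span {x})).FG) :
    Module.FinitePresentation R (span (t : Set R)) := by
  classical
  induction t using Finset.induction_on with
  | empty => rw [Finset.coe_empty, span_empty]; infer_instance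
  | insert a s _ ih =>
    have := ih fun x hx ↦ ht x (Finset.mem_insert_of_mem hx)
    rw [Finset.coe_insert, span_insert, sup_comm]
    exact Submodule.finitePresentation_sup_of_colon_fg
      (ht a (Finset.mem_insert_self a s) _ ⟨s, rfl⟩)

open Classical in
theorem IsPhiRing.span_filter_notMem_nilradical {R : Type u} [CommRing R] (hR : IsPhiRing R)
    (s : Finset R) (hs : ¬ Ideal.span (s : Set R) ≤ nilradical R) :
    Ideal.span (s.filter (· ∉ nilradical R) : Set R) = Ideal.span s := by
  obtain ⟨b, hbs, hb⟩ : ∃ b ∈ s, b ∉ nilradical R := by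
    by_contra! h
    exact hs (Ideal.span_le.mpr h)
  have hb' : b ∈ Ideal.span (s.filter (· ∉ nilradical R) : Set R) :=
    Ideal.subset_span (Finset.mem_filter.mpr ⟨hbs, hb⟩)
  refine le_antisymm (Ideal.span_mono (Finset.filter_subset _ s)) (Ideal.span_le.mpr ?_)
  intro x hx
  by_cases hxn : x ∈ nilradical R
  · exact (hR.2 b hb).trans ((Ideal.span_singleton_le_iff_mem _).mpr hb') hxn
  · exact Ideal.subset_span (Finset.mem_filter.mpr ⟨hx, hxn⟩)

/-- A φ-ring `R` is nonnil-coherent if and only if for every finitely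
generated ideal `I` of `R` and every non-nilpotent `b ∈ R`, the colon ideal `(I :_R b)`
is finitely generated. -/
theorem nonnilCoherent_iff_colon_fg (R : Type u) [CommRing R] (hR : IsPhiRing R) :
    IsNonnilCoherent R ↔
      ∀ (I : Ideal R) (b : R), I.FG → b ∉ nilradical R →
        (Submodule.colon I (Ideal.span {b})).FG := by
  constructor
  · intro h I b hI hb
    have := h _ (Submodule.FG.sup hI (Submodule.fg_span_singleton b))
      fun hle ↦ hb (hle (Submodule.mem_sup_right (Submodule.mem_span_singleton_self b)))
    exact Submodule.colon_fg_of_finitePresentation_sup hI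
  · classical
    rintro h I ⟨s, rfl⟩ hs
    rw [← hR.span_filter_notMem_nilradical s hs]
    exact Ideal.finitePresentation_span_of_forall_colon_fg _
      fun x hx I hI ↦ h I x hI (Finset.mem_filter.mp hx).2
end

section
/- Let R be a φ-ring. Then R is nonnil-coherent if and only if R/Nil(R) is a coherent integral domain and the annihilator ideal (0 :_R r) is finitely generated for every non-nilpotent element r ∈ R. -/
/-!
Write `N = Nil(R)` and let `x₁, …, xₙ` generate a nonnil ideal, with `x_k ∉ N`. Since
`N ⊆ (x_k)` and `N` is prime, every element of `N` is `d x_k` with `d ∈ N`; so a relation among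
the `xᵢ` modulo `N` becomes an honest relation after changing its `k`-th coefficient by an
element of `N`. Hence the relations of the `xᵢ` map onto the relations of their images in
`R/N`, which transfers finite presentation from `R` down to `R/N`. Conversely, a relation with
all coefficients in `N ⊆ (x_k)` is a combination of the Koszul relations `x_k eᵢ - xᵢ e_k` and of
`(0 :_R x_k) e_k`; together with lifts of generators of the relations over `R/N` these generate
all relations, so finite presentation lifts back from `R/N` to `R` once `(0 :_R x_k)` is finitely
generated.
-/

open CategoryTheory

universe u

/-- A ring is coherent if every finitely generated ideal is finitely presented. -/
def IsCoherentRing (S : Type u) [CommRing S] : Prop :=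
  ∀ I : Ideal S, I.FG → Module.FinitePresentation S I

open Submodule

theorem Submodule.fg_of_fg_map_of_inf_ker_le {R M P : Type*} [Ring R] [AddCommGroup M]
    [Module R M] [AddCommGroup P] [Module R P] (f : M →ₗ[R] P) {K L : Submodule R M}
    (hK : (K.map f).FG) (hL : L.FG) (hLK : L ≤ K) (hker : K ⊓ LinearMap.ker f ≤ L) :
    K.FG := by
  -- Divide out `f L` as well: the kernel of the composite meets `K` exactly in `L`.
  let g := (L.map f).mkQ ∘ₗ f
  refine fg_of_fg_map_of_fg_inf_ker g ?_ ?_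
  · rw [map_comp]
    exact hK.map _
  · rwa [LinearMap.ker_comp, ker_mkQ, comap_map_eq, inf_comm, sup_inf_assoc_of_le _ hLK,
      sup_eq_left.mpr (by rwa [inf_comm])]

theorem LinearMap.finitePresentation_range_iff {R M N : Type*} [CommRing R] [AddCommGroup M]
    [Module R M] [AddCommGroup N] [Module R N] [Module.FinitePresentation R M] (f : M →ₗ[R] N) :
    Module.FinitePresentation R (LinearMap.range f) ↔ (LinearMap.ker f).FG := by
  rw [← Module.FinitePresentation.fg_ker_iff f.rangeRestrict f.surjective_rangeRestrict,
    ker_rangeRestrict]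

section

variable {R : Type*} [CommRing R]

theorem Submodule.finitePresentation_span_range_iff {M ι : Type*} [AddCommGroup M] [Module R M]
    [Fintype ι] (x : ι → M) :
    Module.FinitePresentation R (Submodule.span R (Set.range x)) ↔
      (LinearMap.ker (Fintype.linearCombination R x)).FG := by
  rw [← Fintype.range_linearCombination, LinearMap.finitePresentation_range_iff]

theorem Ideal.ker_toSpanSingleton_eq_bot_colon (r : R) :
    LinearMap.ker (LinearMap.toSpanSingleton R R r) = (⊥ : Ideal R).colon (Ideal.span {r}) := by
  ext a
  simp [Ideal.span]

theorem Ideal.fg_bot_colon_of_finitePresentation {r : R}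
    (h : Module.FinitePresentation R (Ideal.span {r})) :
    ((⊥ : Ideal R).colon (Ideal.span {r})).FG := by
  rw [← Ideal.ker_toSpanSingleton_eq_bot_colon]
  exact (LinearMap.finitePresentation_range_iff _).mp (by rwa [LinearMap.range_toSpanSingleton])

theorem Fintype.linearCombination_comp_ringHom {S : Type*} [CommRing S] {ι : Type*} [Fintype ι]
    (f : R →+* S) (x c : ι → R) :
    Fintype.linearCombination S (f ∘ x) (f ∘ c) = f (Fintype.linearCombination R x c) := by
  simp [Fintype.linearCombination_apply, map_sum]

variable {ι : Type*} [Fintype ι] [DecidableEq ι]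

def pivotRelations (x : ι → R) (k : ι) : Submodule R (ι → R) :=
  span R (Set.range fun i => Pi.single i (x k) - Pi.single k (x i)) ⊔
    Submodule.map (LinearMap.single R (fun _ => R) k) ((⊥ : Ideal R).colon (Ideal.span {x k}))

theorem pivotRelations_le_ker (x : ι → R) (k : ι) :
    pivotRelations x k ≤ LinearMap.ker (Fintype.linearCombination R x) := by
  refine sup_le (span_le.mpr ?_) (map_le_iff_le_comap.mpr fun a ha => ?_)
  · rintro _ ⟨i, rfl⟩
    simp [mul_comm]
  · simpa [Ideal.mem_colon_span_singleton] using ha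

theorem pivotRelations_fg (x : ι → R) (k : ι)
    (h : ((⊥ : Ideal R).colon (Ideal.span {x k})).FG) : (pivotRelations x k).FG :=
  (fg_span (Set.finite_range _)).sup (Submodule.FG.map _ h)

theorem mem_pivotRelations {x : ι → R} {k : ι} {c : ι → R}
    (hc : c ∈ LinearMap.ker (Fintype.linearCombination R x))
    (hck : ∀ i, c i ∈ Ideal.span {x k}) : c ∈ pivotRelations x k := by
  choose d hd using fun i => Ideal.mem_span_singleton'.mp (hck i)
  have hsplit : c = ∑ i, d i • (Pi.single i (x k) - Pi.single k (x i)) +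
      Pi.single k (∑ i, d i * x i) := by
    funext j
    simp [Finset.sum_apply, Pi.single_apply, mul_sub, Finset.sum_sub_distrib, hd]
  have hann : ∑ i, d i * x i ∈ (⊥ : Ideal R).colon (Ideal.span {x k}) := by
    simp only [Ideal.mem_colon_span_singleton, Submodule.mem_bot, Finset.sum_mul]
    simpa [Fintype.linearCombination_apply, mul_right_comm, hd] using hc
  rw [hsplit]
  exact add_mem (sum_mem fun i _ => smul_mem _ _ (mem_sup_left (subset_span ⟨i, rfl⟩)))
    (mem_sup_right ⟨_, hann, rfl⟩)

end

theorem IsNonnilCoherent.fg_bot_colon {R : Type u} [CommRing R] (h : IsNonnilCoherent R) {r : R}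
    (hr : r ∉ nilradical R) : ((⊥ : Ideal R).colon (Ideal.span {r})).FG :=
  Ideal.fg_bot_colon_of_finitePresentation <|
    h _ (fg_span_singleton r) fun hle => hr (hle (Ideal.mem_span_singleton_self r))

namespace IsPhiRing

variable {R : Type u} [CommRing R]

theorem exists_mul_eq_of_mem_nilradical (hR : IsPhiRing R) {x y : R} (hx : x ∉ nilradical R)
    (hy : y ∈ nilradical R) : ∃ d ∈ nilradical R, d * x = y := by
  obtain ⟨d, rfl⟩ := Ideal.mem_span_singleton'.mp (hR.2 x hx hy)
  exact ⟨d, (hR.1.mem_or_mem hy).resolve_right hx, rfl⟩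

theorem map_ker_linearCombination (hR : IsPhiRing R) {ι : Type*} [Fintype ι] [DecidableEq ι]
    {x : ι → R} {k : ι} (hk : x k ∉ nilradical R) :
    (LinearMap.ker (Fintype.linearCombination R x)).map
        ((Algebra.linearMap R (R ⧸ nilradical R)).compLeft ι) =
      (LinearMap.ker (Fintype.linearCombination (R ⧸ nilradical R)
        (algebraMap R (R ⧸ nilradical R) ∘ x))).restrictScalars R := by
  ext c'
  simp only [mem_map, restrictScalars_mem, LinearMap.mem_ker]
  constructor
  · rintro ⟨c, hc, rfl⟩
    change Fintype.linearCombination _ _ (algebraMap R _ ∘ c) = 0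
    rw [Fintype.linearCombination_comp_ringHom, hc, map_zero]
  · intro hc'
    obtain ⟨c, rfl⟩ : ∃ c, algebraMap R _ ∘ c = c' := Ideal.Quotient.mk_surjective.comp_left c'
    rw [Fintype.linearCombination_comp_ringHom, Ideal.Quotient.algebraMap_eq,
      Ideal.Quotient.eq_zero_iff_mem] at hc'
    obtain ⟨d, hd, hdx⟩ := hR.exists_mul_eq_of_mem_nilradical hk hc'
    refine ⟨c - Pi.single k d, ?_, funext fun i => ?_⟩
    · simp [hdx]
    · have : Ideal.Quotient.mk (nilradical R) d = 0 := Ideal.Quotient.eq_zero_iff_mem.mpr hd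
      simp [Pi.single_apply, apply_ite, this]

theorem isCoherentRing_quotient (hR : IsPhiRing R) (h : IsNonnilCoherent R) :
    IsCoherentRing (R ⧸ nilradical R) := by
  intro I hI
  obtain ⟨n, s, rfl⟩ := fg_iff_exists_fin_generating_family.mp hI
  obtain ⟨y, rfl⟩ : ∃ y, algebraMap R (R ⧸ nilradical R) ∘ y = s :=
    Ideal.Quotient.mk_surjective.comp_left s
  by_cases hy : ∀ i, y i ∈ nilradical R
  · rw [span_eq_bot.mpr (by simp [Ideal.Quotient.eq_zero_iff_mem, hy])]
    infer_instance
  obtain ⟨k, hk⟩ := not_forall.mp hy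
  have hK : (LinearMap.ker (Fintype.linearCombination R y)).FG :=
    (Submodule.finitePresentation_span_range_iff y).mp <|
      h _ (fg_span (Set.finite_range y)) fun hle => hk (hle (subset_span ⟨k, rfl⟩))
  rw [Submodule.finitePresentation_span_range_iff]
  refine FG.of_restrictScalars R ?_
  rw [← hR.map_ker_linearCombination hk]
  exact hK.map _

theorem isNonnilCoherent_of_quotient (hR : IsPhiRing R)
    (hcoh : IsCoherentRing (R ⧸ nilradical R))
    (hann : ∀ r : R, r ∉ nilradical R → ((⊥ : Ideal R).colon (Ideal.span {r})).FG) :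
    IsNonnilCoherent R := by
  intro I hI hIN
  obtain ⟨n, x, rfl⟩ := fg_iff_exists_fin_generating_family.mp hI
  obtain ⟨k, hk⟩ : ∃ k, x k ∉ nilradical R := by
    by_contra! hx
    exact hIN (span_le.mpr (Set.range_subset_iff.mpr hx))
  have hbar : (LinearMap.ker (Fintype.linearCombination (R ⧸ nilradical R)
      (algebraMap R _ ∘ x))).FG :=
    (Submodule.finitePresentation_span_range_iff _).mp (hcoh _ (fg_span (Set.finite_range _)))
  rw [Submodule.finitePresentation_span_range_iff]
  refine fg_of_fg_map_of_inf_ker_le ((Algebra.linearMap R (R ⧸ nilradical R)).compLeft (Fin n))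
    ?_ (pivotRelations_fg x k (hann _ hk)) (pivotRelations_le_ker x k) ?_
  · rw [hR.map_ker_linearCombination hk]
    exact hbar.restrictScalars_of_surjective Ideal.Quotient.mk_surjective
  · rintro c ⟨hc, hcN⟩
    refine mem_pivotRelations hc fun i => hR.2 _ hk ?_
    exact Ideal.Quotient.eq_zero_iff_mem.mp (congr_fun hcN i)

end IsPhiRing

/-- A φ-ring `R` is nonnil-coherent if and only if `R/Nil(R)` is a
coherent integral domain and `(0 :_R r)` is finitely generated for every
non-nilpotent element `r ∈ R`. -/
theorem nonnilCoherent_iff_quotient_coherent_domain (R : Type u) [CommRing R]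
    (hR : IsPhiRing R) :
    IsNonnilCoherent R ↔
      (IsDomain (R ⧸ nilradical R) ∧ IsCoherentRing (R ⧸ nilradical R)) ∧
        ∀ r : R, r ∉ nilradical R →
          (Submodule.colon (⊥ : Ideal R) (Ideal.span {r})).FG := by
  refine ⟨fun h => ⟨⟨?_, hR.isCoherentRing_quotient h⟩, fun r => h.fg_bot_colon⟩,
    fun ⟨⟨_, hcoh⟩, hann⟩ => hR.isNonnilCoherent_of_quotient hcoh hann⟩
  exact (Ideal.Quotient.isDomain_iff_prime _).mpr hR.1
end

section
/- Let R be a nonnil-coherent φ-ring and T a finitely presented φ-torsion R-module generated by elements t_1, …, t_k, t_{k+1} with k ≥ 1. Then the submodule T_k of T generated by t_1, …, t_k is finitely presented. -/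
open CategoryTheory

universe u

/-!
Let `N` be the span of `t 0, …, t (k-1)`. The quotient `T ⧸ N` is cyclic, generated by the image
`c` of the last generator, so `T ⧸ N ≅ R ⧸ I` with `I = ann c`. As `T ⧸ N` is finitely presented,
`I` is finitely generated; as `T` is φ-torsion, `I` is nonnil; so `I` is finitely presented by
nonnil-coherence. In the pullback `L = T ×_{T ⧸ N} R`, the projection `L → T` is onto with kernel
`I`, so `L` is finitely presented, and the projection `L → R` is onto with kernel `N`; it splits
because `R` is free, so `N` is a direct summand of `L`.
-/

section

variable {R : Type*} [CommRing R] {M N P : Type*} [AddCommGroup M] [Module R M]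
  [AddCommGroup N] [Module R N] [AddCommGroup P] [Module R P]

theorem Module.finitePresentation_of_exact [Module.FinitePresentation R M]
    [Module.FinitePresentation R P] {f : M →ₗ[R] N} {g : N →ₗ[R] P}
    (hf : Function.Injective f) (hg : Function.Surjective g) (H : Function.Exact f g) :
    Module.FinitePresentation R N :=
  have : Module.FinitePresentation R (LinearMap.ker g) :=
    .of_equiv ((LinearEquiv.ofInjective f hf).trans (.ofEq _ _ H.linearMap_ker_eq.symm))
  Module.finitePresentation_of_ker g hg

variable {T F C : Type*} [AddCommGroup T] [Module R T] [AddCommGroup F] [Module R F]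
  [AddCommGroup C] [Module R C]

theorem LinearMap.mem_ker_coprod_neg_iff (f : T →ₗ[R] C) (g : F →ₗ[R] C) (x : T × F) :
    x ∈ LinearMap.ker (f.coprod (-g)) ↔ f x.1 = g x.2 := by
  simp [add_neg_eq_zero]

theorem LinearMap.finitePresentation_ker_coprod_neg [Module.FinitePresentation R T]
    (f : T →ₗ[R] C) (g : F →ₗ[R] C) (hg : Function.Surjective g)
    [Module.FinitePresentation R (LinearMap.ker g)] :
    Module.FinitePresentation R (LinearMap.ker (f.coprod (-g))) := by
  let L := LinearMap.ker (f.coprod (-g))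
  let i : LinearMap.ker g →ₗ[R] L :=
    ((LinearMap.inr R T F).comp (LinearMap.ker g).subtype).codRestrict L
      fun a => (mem_ker_coprod_neg_iff f g _).2 (by simp)
  refine Module.finitePresentation_of_exact (f := i) (g := (LinearMap.fst R T F).comp L.subtype)
    ?_ ?_ ?_
  · intro a b h
    exact Subtype.ext (congrArg (fun y : L => (y : T × F).2) h)
  · intro x
    obtain ⟨a, ha⟩ := hg (f x)
    exact ⟨⟨(x, a), (mem_ker_coprod_neg_iff f g _).2 ha.symm⟩, rfl⟩
  · rintro ⟨⟨x, a⟩, hxa⟩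
    refine ⟨fun hx : x = 0 => ?_, ?_⟩
    · subst hx
      exact ⟨⟨a, by simpa [eq_comm] using (mem_ker_coprod_neg_iff f g _).1 hxa⟩, rfl⟩
    · rintro ⟨b, hb⟩
      rw [← hb]
      rfl

theorem Submodule.finitePresentation_of_quotient_cover [Module.FinitePresentation R T]
    [Module.Projective R F] (N : Submodule R T) (g : F →ₗ[R] T ⧸ N)
    (hg : Function.Surjective g) [Module.FinitePresentation R (LinearMap.ker g)] :
    Module.FinitePresentation R N := by
  have := LinearMap.finitePresentation_ker_coprod_neg N.mkQ g hg
  let L := LinearMap.ker (N.mkQ.coprod (-g))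
  let i : N →ₗ[R] L :=
    ((LinearMap.inl R T F).comp N.subtype).codRestrict L
      fun x => (LinearMap.mem_ker_coprod_neg_iff _ _ _).2 (by simp)
  refine Module.finitePresentation_of_projective_of_exact i
    ((LinearMap.snd R T F).comp L.subtype) ?_ ?_ ?_
  · intro a b h
    exact Subtype.ext (congrArg (fun y : L => (y : T × F).1) h)
  · intro a
    obtain ⟨x, hx⟩ := N.mkQ_surjective (g a)
    exact ⟨⟨(x, a), (LinearMap.mem_ker_coprod_neg_iff _ _ _).2 hx⟩, rfl⟩
  · rintro ⟨⟨x, a⟩, hxa⟩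
    refine ⟨fun ha : a = 0 => ?_, ?_⟩
    · subst ha
      exact ⟨⟨x, by simpa using (LinearMap.mem_ker_coprod_neg_iff _ _ _).1 hxa⟩, rfl⟩
    · rintro ⟨y, hy⟩
      rw [← hy]
      rfl

theorem Submodule.toSpanSingleton_mkQ_surjective {ι : Type*} {t : ι → T}
    (hgen : Submodule.span R (Set.range t) = ⊤) (N : Submodule R T) (j : ι)
    (hN : ∀ i ≠ j, t i ∈ N) :
    Function.Surjective (LinearMap.toSpanSingleton R (T ⧸ N) (N.mkQ (t j))) := by
  rw [← LinearMap.range_eq_top, ← LinearMap.span_singleton_eq_range, eq_top_iff,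
    ← N.range_mkQ, LinearMap.range_eq_map, ← hgen, Submodule.map_span, Submodule.span_le]
  rintro _ ⟨_, ⟨i, rfl⟩, rfl⟩
  by_cases hij : i = j
  · subst hij
    exact Submodule.mem_span_singleton_self _
  · simp [(Submodule.Quotient.mk_eq_zero N).2 (hN i hij)]

end

section

variable {R M N : Type u} [CommRing R] [AddCommGroup M] [Module R M] [AddCommGroup N]
  [Module R N]

theorem IsPhiTorsion.of_surjective (hM : IsPhiTorsion R M) (f : M →ₗ[R] N)
    (hf : Function.Surjective f) : IsPhiTorsion R N := by
  intro n
  obtain ⟨m, rfl⟩ := hf n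
  obtain ⟨I, hI, hIm⟩ := hM m
  exact ⟨I, hI, fun a ha => by rw [← map_smul, hIm a ha, map_zero]⟩

theorem IsPhiTorsion.not_ker_toSpanSingleton_le_nilradical (hM : IsPhiTorsion R M) (m : M) :
    ¬ LinearMap.ker (LinearMap.toSpanSingleton R M m) ≤ nilradical R := by
  obtain ⟨I, hI, hIm⟩ := hM m
  exact fun h => hI fun a ha => h (hIm a ha)

theorem IsNonnilCoherent.finitePresentation_ker_toSpanSingleton (hR : IsNonnilCoherent R)
    [Module.FinitePresentation R M] (hM : IsPhiTorsion R M) (m : M)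
    (hm : Function.Surjective (LinearMap.toSpanSingleton R M m)) :
    Module.FinitePresentation R (LinearMap.ker (LinearMap.toSpanSingleton R M m)) :=
  hR _ (Module.FinitePresentation.fg_ker _ hm) (hM.not_ker_toSpanSingleton_le_nilradical m)

end

theorem submodule_span_finitePresentation_general (R : Type u) [CommRing R]
    (hcoh : IsNonnilCoherent R) (T : Type u) [AddCommGroup T] [Module R T]
    (hfp : Module.FinitePresentation R T) (htor : IsPhiTorsion R T)
    (k : ℕ) (t : Fin (k + 1) → T)
    (hgen : Submodule.span R (Set.range t) = ⊤) :
    Module.FinitePresentation R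
      (Submodule.span R (t '' {i : Fin (k + 1) | (i : ℕ) < k})) := by
  set N := Submodule.span R (t '' {i : Fin (k + 1) | (i : ℕ) < k})
  have : Module.FinitePresentation R (T ⧸ N) :=
    Module.finitePresentation_of_surjective N.mkQ N.mkQ_surjective
      (by rw [N.ker_mkQ]; exact Submodule.fg_span ((Set.toFinite _).image t))
  have hc := N.toSpanSingleton_mkQ_surjective hgen (Fin.last k) fun i hi =>
    Submodule.subset_span ⟨i, Fin.val_lt_last hi, rfl⟩
  have := hcoh.finitePresentation_ker_toSpanSingleton
    (htor.of_surjective N.mkQ N.mkQ_surjective) _ hc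
  exact N.finitePresentation_of_quotient_cover _ hc

/-- Let `R` be a nonnil-coherent φ-ring and `T` a finitely presented
φ-torsion module generated by `t 0, …, t k` (with `k ≥ 1` generators before the last).
Then the submodule generated by the first `k` generators is finitely presented. -/
theorem submodule_span_finitePresentation (R : Type u) [CommRing R] (hR : IsPhiRing R)
    (hcoh : IsNonnilCoherent R) (T : Type u) [AddCommGroup T] [Module R T]
    (hfp : Module.FinitePresentation R T) (htor : IsPhiTorsion R T)
    (k : ℕ) (hk : 1 ≤ k) (t : Fin (k + 1) → T)
    (hgen : Submodule.span R (Set.range t) = ⊤) :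
    Module.FinitePresentation R
      (Submodule.span R (t '' {i : Fin (k + 1) | (i : ℕ) < k})) :=
  submodule_span_finitePresentation_general R hcoh T hfp htor k t hgen
end

section
/- Let R be a φ-ring. Then R is a φ-IF ring if and only if for every R-module M, M is φ-flat if and only if M is nonnil-FP-injective. -/
/-!
If `R` is φ-IF, the character module `W = Hom_ℤ(R ⧸ Nil(R), ℚ/ℤ)` is nonnil-injective: because
`Nil(R)` is divided, `L ⊗ R ⧸ Nil(R) → G ⊗ R ⧸ Nil(R)` is injective whenever `G ⧸ L` is φ-torsion,
and by duality `W`-valued maps extend along such inclusions. Hence `W` is φ-flat. For a nonnil `s`,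
`Tor₁(R ⧸ (s), W) = 0` lets every `s`-torsion element of `W` lift to an `s`-torsion element of a
projective module; since `Nil(R)` is prime such an element lies in `Nil(R) • P`, so it maps to `0`.
Thus `s` acts injectively on `W`, i.e. surjectively on `R ⧸ Nil(R)`, and `s` is a unit. So every
φ-torsion module vanishes and both conditions hold for every module. The converse is immediate,
as nonnil-injective modules are nonnil-FP-injective.
-/

open CategoryTheory

universe u

open TensorProduct

section

variable {R : Type*} [CommRing R] {M N : Type*} [AddCommGroup M] [Module R M]
  [AddCommGroup N] [Module R N]

lemma tensorQuotEquivQuotSMul_comp_rTensor (I : Ideal R) (f : M →ₗ[R] N) :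
    (tensorQuotEquivQuotSMul N I).toLinearMap ∘ₗ f.rTensor (R ⧸ I) =
      (I • ⊤ : Submodule R M).mapQ (I • ⊤) f (Submodule.smul_top_le_comap_smul_top I f) ∘ₗ
        (tensorQuotEquivQuotSMul M I).toLinearMap := by
  refine TensorProduct.ext' fun m r => ?_
  obtain ⟨r, rfl⟩ := Ideal.Quotient.mk_surjective r
  simp

lemma rTensor_quotient_subtype_injective {I : Ideal R} {L : Submodule R M}
    (h : I • ⊤ ⊓ L ≤ I • L) : Function.Injective (L.subtype.rTensor (R ⧸ I)) := by
  suffices Function.Injective ((I • ⊤ : Submodule R L).mapQ (I • ⊤) L.subtype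
      (Submodule.smul_top_le_comap_smul_top I L.subtype)) by
    rw [← (tensorQuotEquivQuotSMul M I).injective.of_comp_iff, ← LinearEquiv.coe_toLinearMap,
      ← LinearMap.coe_comp, tensorQuotEquivQuotSMul_comp_rTensor, LinearMap.coe_comp]
    exact this.comp (tensorQuotEquivQuotSMul L I).injective
  refine (injective_iff_map_eq_zero _).mpr fun x hx => ?_
  obtain ⟨x, rfl⟩ := Submodule.Quotient.mk_surjective _ x
  rw [Submodule.mapQ_apply, Submodule.Quotient.mk_eq_zero] at hx
  obtain ⟨y, hy, hyx⟩ : (x : M) ∈ (I • ⊤ : Submodule R L).map L.subtype := by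
    rw [Submodule.map_smul'', Submodule.map_top, Submodule.range_subtype]
    exact h ⟨hx, x.2⟩
  rw [Submodule.Quotient.mk_eq_zero, ← Subtype.ext hyx]
  exact hy

lemma LinearMap.exists_comp_eq_of_surjective {P : Type*} [AddCommGroup P] [Module R P]
    {δ : M →ₗ[R] N} (hδ : Function.Surjective δ) {ψ : M →ₗ[R] P}
    (h : LinearMap.ker δ ≤ LinearMap.ker ψ) : ∃ f : N →ₗ[R] P, f ∘ₗ δ = ψ :=
  ⟨(LinearMap.ker δ).liftQ ψ h ∘ₗ (δ.quotKerEquivOfSurjective hδ).symm.toLinearMap,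
    LinearMap.ext fun x => by simp [LinearMap.quotKerEquivOfSurjective_symm_apply]⟩

lemma Module.Projective.mem_smul_top_of_smul_eq_zero [Module.Projective R M] {I : Ideal R}
    {s : R} (hs : ∀ c : R, s * c = 0 → c ∈ I) {q : M} (hq : s • q = 0) :
    q ∈ I • (⊤ : Submodule R M) := by
  obtain ⟨σ, hσ⟩ := Module.projective_def.mp ‹Module.Projective R M›
  rw [← hσ q, Finsupp.linearCombination_apply]
  refine Submodule.sum_mem _ fun i _ => Submodule.smul_mem_smul (hs _ ?_) trivial
  simpa using congr($(congrArg σ hq) i)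

lemma exists_smul_eq_zero_lift_of_lTensor_injective {π : M →ₗ[R] N}
    (hπ : Function.Surjective π) {s : R}
    (hinj : Function.Injective ((LinearMap.ker π).subtype.lTensor (R ⧸ Ideal.span {s})))
    {n : N} (hn : s • n = 0) : ∃ q : M, s • q = 0 ∧ π q = n := by
  obtain ⟨p, rfl⟩ := hπ n
  have hsp : s • p ∈ LinearMap.ker π := by rw [LinearMap.mem_ker, map_smul, hn]
  have h1 : (1 : R ⧸ Ideal.span {s}) ⊗ₜ[R] (⟨s • p, hsp⟩ : LinearMap.ker π) = 0 := by
    refine hinj ?_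
    rw [LinearMap.lTensor_tmul, map_zero, Submodule.subtype_apply, tmul_smul, smul_tmul',
      Algebra.smul_def, mul_one, Ideal.Quotient.algebraMap_eq,
      Ideal.Quotient.eq_zero_iff_mem.mpr (Ideal.mem_span_singleton_self s), zero_tmul]
  rw [← (quotTensorEquivQuotSMul _ _).map_eq_zero_iff, quotTensorEquivQuotSMul_mk_one_tmul,
    Submodule.Quotient.mk_eq_zero, Submodule.ideal_span_singleton_smul,
    Submodule.mem_smul_pointwise_iff_exists] at h1
  obtain ⟨k, -, hk⟩ := h1
  refine ⟨p - k, ?_, ?_⟩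
  · rw [smul_sub, ← Submodule.coe_smul, hk, sub_self]
  · rw [map_sub, k.2, sub_zero]

lemma CharacterModule.smul_eq_zero_of_mem {I : Ideal R} {z : R} (hz : z ∈ I)
    (χ : CharacterModule (R ⧸ I)) : z • χ = 0 := by
  ext d
  obtain ⟨x, rfl⟩ := Ideal.Quotient.mk_surjective d
  rw [CharacterModule.smul_apply, Algebra.smul_def, Ideal.Quotient.algebraMap_eq, ← map_mul,
    Ideal.Quotient.eq_zero_iff_mem.mpr (I.mul_mem_right x hz), map_zero]
  rfl

lemma isUnit_of_smul_eq_zero_characterModule {s : R}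
    (h : ∀ χ : CharacterModule (R ⧸ nilradical R), s • χ = 0 → χ = 0) : IsUnit s := by
  let μ := DistribSMul.toLinearMap R (R ⧸ nilradical R) s
  obtain ⟨d, hd⟩ := CharacterModule.surjective_of_dual_injective μ
    ((injective_iff_map_eq_zero (CharacterModule.dual μ)).mpr h) 1
  obtain ⟨c, rfl⟩ := Ideal.Quotient.mk_surjective d
  have hnil : IsNilpotent (s * c - 1) := by
    rw [← mem_nilradical, ← Ideal.Quotient.eq, map_mul, map_one]
    exact hd
  exact isUnit_of_mul_isUnit_left (sub_add_cancel (s * c) 1 ▸ hnil.isUnit_add_one)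

end

section Derived

variable {R : Type u} [CommRing R]

lemma subsingleton_ext_one_of_surjective_lcomp {T N : Type u} [AddCommGroup T] [Module R T]
    [AddCommGroup N] [Module R N]
    (h : ∀ (G : Type u) [AddCommGroup G] [Module R G] (π : G →ₗ[R] T), Function.Surjective π →
      Function.Surjective ((LinearMap.ker π).subtype.lcomp R N)) :
    Subsingleton (((Ext R (ModuleCat.{u} R) 1).obj (Opposite.op (ModuleCat.of R T))).obj
      (ModuleCat.of R N)) := by
  let P := ProjectiveResolution.of (ModuleCat.of R T)
  let d₁₀ := (P.complex.d 1 0).hom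
  let π := (P.π.f 0).hom
  have hπ : Function.Surjective π := (ModuleCat.epi_iff_surjective (P.π.f 0)).mp inferInstance
  have hd₁₀ : LinearMap.range d₁₀ = LinearMap.ker π :=
    (ShortComplex.moduleCat_exact_iff_range_eq_ker _).mp P.exact₀
  have hd₂₁ : LinearMap.range (P.complex.d 2 1).hom = LinearMap.ker d₁₀ := by
    have := P.complex_exactAt_succ 0
    rwa [HomologicalComplex.exactAt_iff' _ 2 1 0 (by simp) (by simp),
      ShortComplex.moduleCat_exact_iff_range_eq_ker] at this
  let δ : P.complex.X 1 →ₗ[R] LinearMap.ker π :=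
    d₁₀.codRestrict _ fun x => hd₁₀ ▸ LinearMap.mem_range_self d₁₀ x
  have hδ : Function.Surjective δ := by
    rintro ⟨y, hy⟩
    obtain ⟨x, rfl⟩ := hd₁₀ ▸ hy
    exact ⟨x, rfl⟩
  have hexact : ((P.complex.linearYonedaObj R (ModuleCat.of R N)).sc' 0 1 2).Exact := by
    rw [ShortComplex.moduleCat_exact_iff]
    intro ψ hψ
    obtain ⟨f, hf⟩ := LinearMap.exists_comp_eq_of_surjective hδ (ψ := ψ.hom) <| by
      rw [LinearMap.ker_codRestrict, ← hd₂₁]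
      rintro _ ⟨z, rfl⟩
      have hψ' : (P.complex.d 2 1 ≫ ψ).hom = 0 := congrArg ModuleCat.Hom.hom hψ
      exact LinearMap.congr_fun hψ' z
    obtain ⟨g, rfl⟩ := h _ π hπ f
    exact ⟨ModuleCat.ofHom g, ModuleCat.hom_ext (by rw [← hf]; rfl)⟩
  rw [← ModuleCat.isZero_iff_subsingleton]
  refine Limits.IsZero.of_iso ?_ (P.isoExt 1 _)
  rwa [← HomologicalComplex.exactAt_iff_isZero_homology,
    HomologicalComplex.exactAt_iff' _ 0 1 2 (by simp) (by simp)]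

lemma lTensor_ker_subtype_injective_of_subsingleton_tor {T M : Type u} [AddCommGroup T]
    [Module R T] [AddCommGroup M] [Module R M] (P : ProjectiveResolution (ModuleCat.of R M))
    (hTor : Subsingleton
      (((Tor (ModuleCat.{u} R) 1).obj (ModuleCat.of R T)).obj (ModuleCat.of R M))) :
    Function.Injective ((LinearMap.ker (P.π.f 0).hom).subtype.lTensor T) := by
  let F := (MonoidalCategory.tensoringLeft (ModuleCat.{u} R)).obj (ModuleCat.of R T)
  let d₁₀ := (P.complex.d 1 0).hom
  have hd₁₀ : LinearMap.range d₁₀ = LinearMap.ker (P.π.f 0).hom :=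
    (ShortComplex.moduleCat_exact_iff_range_eq_ker _).mp P.exact₀
  let δ : P.complex.X 1 →ₗ[R] LinearMap.ker (P.π.f 0).hom :=
    d₁₀.codRestrict _ fun x => hd₁₀ ▸ LinearMap.mem_range_self d₁₀ x
  have hδ : Function.Surjective (δ.lTensor T) := by
    refine LinearMap.lTensor_surjective T ?_
    rintro ⟨y, hy⟩
    obtain ⟨x, rfl⟩ := hd₁₀ ▸ hy
    exact ⟨x, rfl⟩
  have hδd : δ ∘ₗ (P.complex.d 2 1).hom = 0 := by
    ext z
    exact congr($(P.complex.d_comp_d 2 1 0).hom z)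
  have hexact : ∀ y : T ⊗[R] P.complex.X 1, d₁₀.lTensor T y = 0 →
      ∃ z : T ⊗[R] P.complex.X 2, (P.complex.d 2 1).hom.lTensor T z = y := by
    have : Subsingleton ((F.leftDerived 1).obj (ModuleCat.of R M)) := hTor
    have hzero : Limits.IsZero (((F.mapHomologicalComplex _).obj P.complex).homology 1) :=
      (ModuleCat.isZero_of_subsingleton _).of_iso (P.isoLeftDerivedObj F 1).symm
    rw [← HomologicalComplex.exactAt_iff_isZero_homology,
      HomologicalComplex.exactAt_iff' _ 2 1 0 (by simp) (by simp),
      ShortComplex.moduleCat_exact_iff] at hzero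
    exact hzero
  refine (injective_iff_map_eq_zero _).mpr fun x hx => ?_
  obtain ⟨y, rfl⟩ := hδ x
  obtain ⟨z, rfl⟩ := hexact y (by rwa [← LinearMap.comp_apply, ← LinearMap.lTensor_comp] at hx)
  rw [← LinearMap.comp_apply, ← LinearMap.lTensor_comp, hδd, LinearMap.lTensor_zero,
    LinearMap.zero_apply]

lemma subsingleton_ext_one_of_subsingleton {T N : Type u} [AddCommGroup T] [Module R T]
    [AddCommGroup N] [Module R N] [Subsingleton T] :
    Subsingleton (((Ext R (ModuleCat.{u} R) 1).obj (Opposite.op (ModuleCat.of R T))).obj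
      (ModuleCat.of R N)) :=
  ModuleCat.subsingleton_of_isZero (isZero_Ext_succ_of_projective _ _ 0)

lemma subsingleton_tor_one_of_subsingleton {T M : Type u} [AddCommGroup T] [Module R T]
    [AddCommGroup M] [Module R M] [Subsingleton T] :
    Subsingleton (((Tor (ModuleCat.{u} R) 1).obj (ModuleCat.of R T)).obj (ModuleCat.of R M)) := by
  let P := ProjectiveResolution.of (ModuleCat.of R M)
  let F := (MonoidalCategory.tensoringLeft (ModuleCat.{u} R)).obj (ModuleCat.of R T)
  have : Subsingleton (((F.mapHomologicalComplex _).obj P.complex).X 1) :=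
    inferInstanceAs (Subsingleton (T ⊗[R] P.complex.X 1))
  exact ModuleCat.subsingleton_of_isZero <|
    (ShortComplex.isZero_homology_of_isZero_X₂ _ (ModuleCat.isZero_of_subsingleton
      (((F.mapHomologicalComplex _).obj P.complex).X 1))).of_iso (P.isoLeftDerivedObj F 1)

end Derived

section PhiRing

variable {R : Type u} [CommRing R]

lemma isPhiTorsion_quotient {I : Ideal R} (hI : ¬ I ≤ nilradical R) : IsPhiTorsion R (R ⧸ I) := by
  refine fun t => ⟨I, hI, fun a ha => ?_⟩
  obtain ⟨x, rfl⟩ := Ideal.Quotient.mk_surjective t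
  rw [Algebra.smul_def, Ideal.Quotient.algebraMap_eq, ← map_mul, Ideal.Quotient.eq_zero_iff_mem]
  exact I.mul_mem_right x ha

lemma IsPhiTorsion.subsingleton {T : Type u} [AddCommGroup T] [Module R T]
    (hunit : ∀ s ∉ nilradical R, IsUnit s) (hT : IsPhiTorsion R T) : Subsingleton T := by
  refine subsingleton_of_forall_eq 0 fun t => ?_
  obtain ⟨I, hI, hIt⟩ := hT t
  obtain ⟨a, ha, haN⟩ := SetLike.not_le_iff_exists.mp hI
  exact (hunit a haN).smul_eq_zero.mp (hIt a ha)

namespace IsPhiRing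

lemma nilradical_smul_top_le_smul_ker (hR : IsPhiRing R) {G : Type*} {T : Type u}
    [AddCommGroup G] [Module R G] [AddCommGroup T] [Module R T] (π : G →ₗ[R] T) (hT : IsPhiTorsion R T) :
    nilradical R • (⊤ : Submodule R G) ≤ nilradical R • LinearMap.ker π := by
  refine Submodule.smul_le.mpr fun z hz g _ => ?_
  obtain ⟨I, hI, hIg⟩ := hT (π g)
  obtain ⟨t, htI, ht⟩ := SetLike.not_le_iff_exists.mp hI
  obtain ⟨c, rfl⟩ := Ideal.mem_span_singleton'.mp (hR.2 t ht hz)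
  rw [mul_smul]
  exact Submodule.smul_mem_smul ((hR.1.mem_or_mem hz).resolve_right ht)
    (by rw [LinearMap.mem_ker, map_smul, hIg t htI])

lemma isNonnilInjective_characterModule (hR : IsPhiRing R) :
    IsNonnilInjective R (CharacterModule (R ⧸ nilradical R)) := fun _ _ _ hT =>
  subsingleton_ext_one_of_surjective_lcomp fun _ _ _ π _ =>
    rTensor_injective_iff_lcomp_surjective.mp <|
      rTensor_quotient_subtype_injective <| inf_le_left.trans <|
        hR.nilradical_smul_top_le_smul_ker π hT

lemma isUnit_of_subsingleton_tor (hR : IsPhiRing R) {s : R} (hs : s ∉ nilradical R)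
    (hTor : Subsingleton (((Tor (ModuleCat.{u} R) 1).obj
      (ModuleCat.of R (R ⧸ Ideal.span {s}))).obj
      (ModuleCat.of R (CharacterModule (R ⧸ nilradical R))))) : IsUnit s := by
  let P := ProjectiveResolution.of (ModuleCat.of R (CharacterModule (R ⧸ nilradical R)))
  have hπ : Function.Surjective (P.π.f 0).hom :=
    (ModuleCat.epi_iff_surjective _).mp inferInstance
  refine isUnit_of_smul_eq_zero_characterModule fun χ hχ => ?_
  obtain ⟨q, hq, rfl⟩ := exists_smul_eq_zero_lift_of_lTensor_injective hπ
    (lTensor_ker_subtype_injective_of_subsingleton_tor P hTor) hχ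
  have hqN : q ∈ nilradical R • ⊤ := Module.Projective.mem_smul_top_of_smul_eq_zero
    (fun c hc => (hR.1.mem_or_mem (hc ▸ zero_mem _)).resolve_left hs) hq
  refine Submodule.smul_induction_on hqN (fun z hz p _ => ?_) fun p p' hp hp' => ?_
  · rw [map_smul]
    exact CharacterModule.smul_eq_zero_of_mem hz _
  · rw [map_add, hp, hp']
    exact add_zero _

end IsPhiRing

end PhiRing

/-- A φ-ring `R` is a φ-IF ring if and only if the φ-flat modules are
exactly the nonnil-FP-injective modules. -/
theorem phiIF_iff_phiFlat_eq_nonnilFPInjective (R : Type u) [CommRing R]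
    (hR : IsPhiRing R) :
    (∀ (M : Type u) [AddCommGroup M] [Module R M],
        IsNonnilInjective R M → IsPhiFlat R M) ↔
      ∀ (M : Type u) [AddCommGroup M] [Module R M],
        (IsPhiFlat R M ↔ IsNonnilFPInjective R M) := by
  refine ⟨fun hIF M _ _ => ?_, fun h M _ _ hM => (h M).mpr fun T _ _ _ hT => hM T hT⟩
  have hunit : ∀ s ∉ nilradical R, IsUnit s := fun s hs =>
    hR.isUnit_of_subsingleton_tor hs <| hIF _ hR.isNonnilInjective_characterModule _ <|
      isPhiTorsion_quotient fun h => hs (h (Ideal.mem_span_singleton_self s))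
  exact ⟨fun _ T _ _ _ hT => have := hT.subsingleton hunit; subsingleton_ext_one_of_subsingleton,
    fun _ T _ _ hT => have := hT.subsingleton hunit; subsingleton_tor_one_of_subsingleton⟩
end

section
/- Let R be a φ-ring. Then R is a φ-IF ring if and only if every R-module can be φ-embedded into a φ-flat module; that is, if and only if for every R-module M there exist a φ-flat R-module F and an injective R-linear map ι : M → F such that F/ι(M) is a φ-torsion module. -/
open CategoryTheory

universe u

/-!
Write `S` for the complement of the prime ideal `Nil(R)`; φ-torsion means `S`-torsion.

If `M` is nonnil-injective and `M ↪ F` has φ-torsion cokernel, then `Ext¹(F/M, M) = 0`, so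
`M` is a direct summand of `F` and `Tor₁(T, M)` is a retract of `Tor₁(T, F)`.

Conversely, embed `M` into an injective module `E` and let `F ⊆ E` be the preimage of the
`S`-torsion submodule of `E/M`. Then `F/M` is φ-torsion and `E/F` has no `S`-torsion, so for
φ-torsion `T` we get `Hom(T, E/F) = 0` and hence `Ext¹(T, F) = 0` from `0 → F → E → E/F → 0`.
Thus `F` is nonnil-injective, and φ-flat when `R` is φ-IF.
-/

namespace CategoryTheory

open Limits

variable {R : Type*} [Ring R] {C : Type*} [Category C] [Abelian C] [Linear R C]
  [EnoughProjectives C]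

lemma ProjectiveResolution.isZero_ext_one_iff {X : C} (P : ProjectiveResolution X) (Y : C) :
    IsZero (((Ext R C 1).obj (Opposite.op X)).obj Y) ↔
      ∀ g : P.complex.X 1 ⟶ Y, P.complex.d 2 1 ≫ g = 0 →
        ∃ h : P.complex.X 0 ⟶ Y, P.complex.d 1 0 ≫ h = g := by
  rw [(P.isoExt 1 Y).isZero_iff, ← HomologicalComplex.exactAt_iff_isZero_homology,
    HomologicalComplex.exactAt_iff' _ 0 1 2 (by simp) (by simp),
    ShortComplex.moduleCat_exact_iff]
  rfl

namespace ShortComplex.ShortExact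

variable {S : ShortComplex C}

lemma isZero_ext_one_of_injective (hS : S.ShortExact) [Injective S.X₂] {X : C}
    (hX : ∀ f : X ⟶ S.X₃, f = 0) :
    IsZero (((Ext R C 1).obj (Opposite.op X)).obj S.X₁) := by
  let P := projectiveResolution X
  -- `P.π.f 0` retyped: its target is only definitionally `X`
  let ε : P.complex.X 0 ⟶ X := P.π.f 0
  have hε : (ShortComplex.mk (P.complex.d 1 0) ε P.complex_d_comp_π_f_zero).Exact := P.exact₀
  have : Epi ε := inferInstanceAs (Epi (P.π.f 0))
  have := hS.mono_f
  refine (P.isZero_ext_one_iff S.X₁).2 fun g hg => ?_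
  -- extend `g ≫ S.f` into the injective `S.X₂`; the extension lands in `S.X₁` because its
  -- image in `S.X₃` factors through `X`
  let h := (P.exact_succ 0).descToInjective (g ≫ S.f) (by simp [reassoc_of% hg])
  have hd : P.complex.d 1 0 ≫ h = g ≫ S.f := (P.exact_succ 0).comp_descToInjective _ _
  have hhg : h ≫ S.g = 0 := by
    rw [← hε.g_desc (h ≫ S.g) (by simp [reassoc_of% hd]), hX (hε.desc _ _), comp_zero]
  refine ⟨hS.exact.lift h hhg, ?_⟩
  rw [← cancel_mono S.f, Category.assoc, hS.exact.lift_f, hd]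

lemma nonempty_splitting_of_isZero_ext_one (hS : S.ShortExact)
    (hExt : IsZero (((Ext R C 1).obj (Opposite.op S.X₃)).obj S.X₁)) :
    Nonempty S.Splitting := by
  let P := projectiveResolution S.X₃
  have := hS.mono_f
  have := hS.epi_g
  let ε : P.complex.X 0 ⟶ S.X₃ := P.π.f 0
  have hε : (ShortComplex.mk (P.complex.d 1 0) ε P.complex_d_comp_π_f_zero).Exact := P.exact₀
  have : Epi ε := inferInstanceAs (Epi (P.π.f 0))
  let f₀ := Projective.factorThru ε S.g
  have hf₀ : f₀ ≫ S.g = ε := Projective.factorThru_comp _ _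
  -- `d ≫ f₀` is a cocycle with values in `S.X₁`; subtracting a coboundary from `f₀` makes it
  -- vanish on boundaries, so that it descends to a section of `S.g`
  let g := hS.exact.lift (P.complex.d 1 0 ≫ f₀) (by
    rw [Category.assoc, hf₀]; exact P.complex_d_comp_π_f_zero)
  have hg : g ≫ S.f = P.complex.d 1 0 ≫ f₀ := hS.exact.lift_f _ _
  obtain ⟨h, hh⟩ := (P.isZero_ext_one_iff S.X₁).1 hExt g (by
    rw [← cancel_mono S.f, Category.assoc, hg, HomologicalComplex.d_comp_d_assoc, zero_comp,
      zero_comp])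
  let s := hε.desc (f₀ - h ≫ S.f) (by simp [reassoc_of% hh, hg])
  have hs : ε ≫ s = f₀ - h ≫ S.f := hε.g_desc _ _
  refine ⟨Splitting.ofExactOfSection S hS.exact s ?_ hS.mono_f⟩
  rw [← cancel_epi ε, reassoc_of% hs, Preadditive.sub_comp, Category.assoc, S.zero,
    comp_zero, sub_zero, hf₀, Category.comp_id]

end ShortComplex.ShortExact

end CategoryTheory

namespace Submodule

variable {R E : Type*} [CommRing R] [AddCommGroup E] [Module R E] {S : Submonoid R}

theorem torsion'_quotient_comap_torsion'_eq_bot (N : Submodule R E) :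
    torsion' R (E ⧸ (torsion' R (E ⧸ N) S).comap N.mkQ) S = ⊥ := by
  refine eq_bot_iff.mpr fun z ⟨a, haz⟩ => ?_
  obtain ⟨x, rfl⟩ := mkQ_surjective _ z
  rw [mkQ_apply, ← Quotient.mk_smul, Quotient.mk_eq_zero, mem_comap, mkQ_apply,
    mem_torsion'_iff] at haz
  obtain ⟨b, hb⟩ := haz
  rw [mem_bot, mkQ_apply, Quotient.mk_eq_zero, mem_comap, mem_torsion'_iff]
  exact ⟨b * a, by rw [mul_smul, mkQ_apply, ← Quotient.mk_smul]; exact hb⟩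

end Submodule

lemma LinearMap.eq_zero_of_isTorsion'_of_torsion'_eq_bot {R T N : Type*} [CommRing R]
    [AddCommGroup T] [Module R T] [AddCommGroup N] [Module R N] {S : Submonoid R}
    (hT : Module.IsTorsion' T S) (hN : Submodule.torsion' R N S = ⊥) (f : T →ₗ[R] N) : f = 0 := by
  ext t
  obtain ⟨a, hat⟩ := @hT t
  have : f t ∈ Submodule.torsion' R N S := ⟨a, by rw [← map_smul_of_tower, hat, map_zero]⟩
  simpa [hN] using this

section PhiTorsion

open Limits

variable {R : Type u} [CommRing R]

theorem isPhiTorsion_iff [(nilradical R).IsPrime] (T : Type u) [AddCommGroup T] [Module R T] :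
    IsPhiTorsion R T ↔ Module.IsTorsion' T (nilradical R).primeCompl := by
  refine ⟨fun hT t => ?_, fun hT t => ?_⟩
  · obtain ⟨I, hI, hIt⟩ := hT t
    obtain ⟨a, haI, ha⟩ := SetLike.not_le_iff_exists.mp hI
    exact ⟨⟨a, ha⟩, hIt a haI⟩
  · obtain ⟨⟨a, ha⟩, hat⟩ := @hT t
    refine ⟨Ideal.span {a}, fun h => ha (h (Ideal.mem_span_singleton_self a)), fun b hb => ?_⟩
    obtain ⟨c, rfl⟩ := Ideal.mem_span_singleton'.mp hb
    rw [mul_smul]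
    exact (congrArg (c • ·) hat).trans (smul_zero c)

theorem Submodule.isZero_ext_one_of_injective {E : Type u} [AddCommGroup E] [Module R E]
    [Module.Injective R E] (F : Submodule R E) {T : Type u} [AddCommGroup T] [Module R T]
    (hT : ∀ f : T →ₗ[R] E ⧸ F, f = 0) :
    IsZero (((Ext R (ModuleCat.{u} R) 1).obj (Opposite.op (ModuleCat.of R T))).obj
      (ModuleCat.of R F)) := by
  let S := ModuleCat.shortComplexOfCompEqZero F.subtype F.mkQ (by ext; simp)
  have hS : S.ShortExact := ModuleCat.shortComplex_shortExact S (LinearMap.exact_subtype_mkQ F)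
    F.injective_subtype F.mkQ_surjective
  have : Injective S.X₂ := Module.injective_object_of_injective_module R E
  exact hS.isZero_ext_one_of_injective fun f => ModuleCat.hom_ext (hT f.hom)

theorem exists_phiEmbedding_into_nonnilInjective [(nilradical R).IsPrime] (M : Type u)
    [AddCommGroup M] [Module R M] :
    ∃ (F : Type u) (_ : AddCommGroup F) (_ : Module R F), IsNonnilInjective R F ∧
      ∃ ι : M →ₗ[R] F, Function.Injective ι ∧ IsPhiTorsion R (F ⧸ LinearMap.range ι) := by
  let E := Injective.under (ModuleCat.of R M)
  have : Module.Injective R E :=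
    Module.injective_module_of_injective_object R E (inj := inferInstanceAs (Injective E))
  let j : M →ₗ[R] E := (Injective.ι (ModuleCat.of R M)).hom
  have hj : Function.Injective j := (ModuleCat.mono_iff_injective _).mp inferInstance
  let N := LinearMap.range j
  let F := (Submodule.torsion' R (E ⧸ N) (nilradical R).primeCompl).comap N.mkQ
  have hjF : ∀ m, j m ∈ F := fun m => ⟨1, by simp [N]⟩
  refine ⟨F, inferInstance, inferInstance, fun T _ _ hT => ?_, j.codRestrict F hjF,
    fun _ _ h => hj (congrArg Subtype.val h), ?_⟩
  · refine ModuleCat.isZero_iff_subsingleton.mp (F.isZero_ext_one_of_injective fun f => ?_)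
    exact f.eq_zero_of_isTorsion'_of_torsion'_eq_bot ((isPhiTorsion_iff T).mp hT)
      (N.torsion'_quotient_comap_torsion'_eq_bot)
  · rw [isPhiTorsion_iff]
    intro z
    obtain ⟨x, rfl⟩ := Submodule.mkQ_surjective _ z
    obtain ⟨a, hax⟩ := x.2
    rw [Submodule.mkQ_apply, ← Submodule.Quotient.mk_smul, Submodule.Quotient.mk_eq_zero] at hax
    obtain ⟨m, hm⟩ := hax
    refine ⟨a, ?_⟩
    rw [Submodule.mkQ_apply, ← Submodule.Quotient.mk_smul, Submodule.Quotient.mk_eq_zero]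
    exact ⟨m, Subtype.ext hm⟩

theorem isPhiFlat_of_phiEmbedding {M F : Type u} [AddCommGroup M] [Module R M] [AddCommGroup F]
    [Module R F] (hM : IsNonnilInjective R M) (hF : IsPhiFlat R F) (ι : M →ₗ[R] F)
    (hι : Function.Injective ι) (hQ : IsPhiTorsion R (F ⧸ LinearMap.range ι)) :
    IsPhiFlat R M := by
  let S := ModuleCat.shortComplexOfCompEqZero ι (LinearMap.range ι).mkQ (by ext; simp)
  have hS : S.ShortExact := ModuleCat.shortComplex_shortExact S (LinearMap.exact_map_mkQ_range ι)
    hι (LinearMap.range ι).mkQ_surjective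
  obtain ⟨σ⟩ := hS.nonempty_splitting_of_isZero_ext_one
    (ModuleCat.isZero_iff_subsingleton.mpr (hM _ hQ))
  intro T _ _ hT
  let ρ : Retract S.X₁ S.X₂ := ⟨S.f, σ.r, σ.f_r⟩
  exact ModuleCat.isZero_iff_subsingleton.mp <| IsZero.of_mono
    (ρ.map ((Tor (ModuleCat.{u} R) 1).obj (ModuleCat.of R T))).i
    (ModuleCat.isZero_iff_subsingleton.mpr (hF T hT))

end PhiTorsion

/-- A φ-ring `R` is a φ-IF ring if and only if every `R`-module can be
φ-embedded into a φ-flat module, i.e. for every `M` there are a φ-flat module `F` and an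
injective linear map `ι : M → F` with `F/ι(M)` φ-torsion. -/
theorem phiIF_iff_phiEmbedding_into_phiFlat (R : Type u) [CommRing R]
    (hR : IsPhiRing R) :
    (∀ (M : Type u) [AddCommGroup M] [Module R M],
        IsNonnilInjective R M → IsPhiFlat R M) ↔
      ∀ (M : Type u) [AddCommGroup M] [Module R M],
        ∃ (F : Type u) (_ : AddCommGroup F) (_ : Module R F),
          IsPhiFlat R F ∧
            ∃ ι : M →ₗ[R] F, Function.Injective ι ∧
              IsPhiTorsion R (F ⧸ LinearMap.range ι) := by
  have := hR.1
  constructor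
  · intro hIF M _ _
    obtain ⟨F, _, _, hF, ι, hι, hQ⟩ := exists_phiEmbedding_into_nonnilInjective (R := R) M
    exact ⟨F, _, _, hIF F hF, ι, hι, hQ⟩
  · intro hemb M _ _ hM
    obtain ⟨F, _, _, hF, ι, hι, hQ⟩ := hemb M
    exact isPhiFlat_of_phiEmbedding hM hF ι hι hQ
end

section
/- Let R be a φ-ring. Then R is a φ-IF ring if and only if every φ-torsion R-module is φ-copure flat, i.e., if and only if Tor_1^R(E,T) = 0 for every φ-torsion R-module T and every nonnil-injective R-module E. -/
open CategoryTheory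

universe u

/-!
Both sides say that `Tor₁` vanishes on every pair of a nonnil-injective and a φ-torsion
module, with the two arguments in opposite order, so the theorem is the symmetry of the
vanishing of `Tor₁`. Take short exact sequences `0 → K → F → Y → 0` and `0 → L → G → X → 0`
with `F`, `G` projective. Then `Tor₁(X, Y) = 0` iff `X ⊗ K → X ⊗ F` is injective, and a
diagram chase through the tensor products of the two sequences, using right exactness of `⊗`
and flatness of `G`, derives this from injectivity of `Y ⊗ L → Y ⊗ G`.
-/

open LinearMap TensorProduct

lemma Function.Exact.exact_comp_iff_injective {R M N P Q : Type*} [Ring R]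
    [AddCommGroup M] [Module R M] [AddCommGroup N] [Module R N]
    [AddCommGroup P] [Module R P] [AddCommGroup Q] [Module R Q] {f : M →ₗ[R] N} {g : N →ₗ[R] P}
    {i : P →ₗ[R] Q} (h : Function.Exact f g) (hg : Function.Surjective g) :
    Function.Exact f (i ∘ₗ g) ↔ Function.Injective i := by
  refine ⟨fun hfig => (injective_iff_map_eq_zero i).2 fun p hp => ?_,
    fun hi => hi.comp_exact_iff_exact.2 h⟩
  obtain ⟨n, rfl⟩ := hg p
  obtain ⟨m, rfl⟩ := (hfig n).1 hp
  exact h.apply_apply_eq_zero m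

lemma LinearMap.rTensor_lTensor_comm {R M N P Q : Type*} [CommSemiring R]
    [AddCommMonoid M] [Module R M] [AddCommMonoid N] [Module R N]
    [AddCommMonoid P] [Module R P] [AddCommMonoid Q] [Module R Q]
    (f : M →ₗ[R] P) (g : N →ₗ[R] Q) (x : M ⊗[R] N) :
    rTensor Q f (lTensor M g x) = lTensor P g (rTensor N f x) := by
  rw [← comp_apply, rTensor_comp_lTensor, ← lTensor_comp_rTensor, comp_apply]

lemma exact_lTensor_iff_injective_lTensor_subtype_range {R M N P : Type*} [CommRing R]
    [AddCommGroup M] [Module R M] [AddCommGroup N] [Module R N] [AddCommGroup P] [Module R P]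
    (X : Type*) [AddCommGroup X] [Module R X] {d₂ : M →ₗ[R] N} {d₁ : N →ₗ[R] P}
    (h : Function.Exact d₂ d₁) :
    Function.Exact (lTensor X d₂) (lTensor X d₁) ↔
      Function.Injective (lTensor X (range d₁).subtype) := by
  have hd₁ : Function.Exact d₂ d₁.rangeRestrict := by
    rw [LinearMap.exact_iff, ker_rangeRestrict, h.linearMap_ker_eq]
  rw [show d₁ = (range d₁).subtype ∘ₗ d₁.rangeRestrict from rfl, lTensor_comp]
  exact (lTensor_exact X hd₁ d₁.surjective_rangeRestrict).exact_comp_iff_injective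
    (lTensor_surjective X d₁.surjective_rangeRestrict)

section

variable {R : Type*} [CommRing R] {K F Y L G X : Type*}
  [AddCommGroup K] [Module R K] [AddCommGroup F] [Module R F] [AddCommGroup Y] [Module R Y]
  [AddCommGroup L] [Module R L] [AddCommGroup G] [Module R G] [AddCommGroup X] [Module R X]
  {ι : K →ₗ[R] F} {π : F →ₗ[R] Y} {κ : L →ₗ[R] G} {ρ : G →ₗ[R] X}

lemma injective_lTensor_of_injective_lTensor_of_flat [Module.Flat R G]
    (hι : Function.Injective ι) (hπ : Function.Surjective π) (hιπ : Function.Exact ι π)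
    (hρ : Function.Surjective ρ) (hκρ : Function.Exact κ ρ)
    (h : Function.Injective (lTensor Y κ)) :
    Function.Injective (lTensor X ι) := by
  rw [lTensor_inj_iff_rTensor_inj] at h
  refine (injective_iff_map_eq_zero _).2 fun t ht => ?_
  obtain ⟨s, rfl⟩ := rTensor_surjective K hρ t
  obtain ⟨u, hu⟩ := (rTensor_exact F hκρ hρ (lTensor G ι s)).1 <| by
    rw [rTensor_lTensor_comm, ht]
  have hπu : lTensor L π u = 0 := h <| by
    rw [map_zero, rTensor_lTensor_comm, hu, ← lTensor_comp_apply,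
      hιπ.linearMap_comp_eq_zero, lTensor_zero, LinearMap.zero_apply]
  obtain ⟨w, rfl⟩ := (lTensor_exact L hιπ hπ u).1 hπu
  have hs : s = rTensor K κ w :=
    Module.Flat.lTensor_preserves_injective_linearMap ι hι <| by
      rw [← hu, ← rTensor_lTensor_comm]
  rw [hs, ← rTensor_comp_apply, hκρ.linearMap_comp_eq_zero, rTensor_zero, LinearMap.zero_apply]

lemma injective_lTensor_iff_injective_lTensor_of_flat [Module.Flat R F] [Module.Flat R G]
    (hι : Function.Injective ι) (hπ : Function.Surjective π) (hιπ : Function.Exact ι π)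
    (hκ : Function.Injective κ) (hρ : Function.Surjective ρ) (hκρ : Function.Exact κ ρ) :
    Function.Injective (lTensor X ι) ↔ Function.Injective (lTensor Y κ) :=
  ⟨injective_lTensor_of_injective_lTensor_of_flat hκ hρ hκρ hπ hιπ,
    injective_lTensor_of_injective_lTensor_of_flat hι hπ hιπ hρ hκρ⟩

end

namespace CategoryTheory.ProjectiveResolution

variable {R : Type u} [CommRing R] {Y : ModuleCat.{u} R} (P : ProjectiveResolution Y)

lemma exact_d_hom : Function.Exact (P.complex.d 2 1).hom (P.complex.d 1 0).hom :=
  (ShortComplex.ShortExact.moduleCat_exact_iff_function_exact _).1 (P.exact_succ 0)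

lemma surjective_π_f_zero_hom : Function.Surjective (P.π.f 0).hom :=
  (ModuleCat.epi_iff_surjective _).1 inferInstance

lemma exact_subtype_range_d_π_f_zero_hom :
    Function.Exact (range (P.complex.d 1 0).hom).subtype (P.π.f 0).hom := by
  have h : (ShortComplex.mk _ _ P.complex_d_comp_π_f_zero).Exact := by
    apply ShortComplex.exact_of_g_is_cokernel
    exact P.isColimitCokernelCofork
  rw [ShortComplex.ShortExact.moduleCat_exact_iff_function_exact] at h
  exact fun y => (h y).trans (by simp)

instance (n : ℕ) : Module.Flat R (P.complex.X n) :=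
  have : Module.Projective R (P.complex.X n) :=
    (IsProjective.iff_projective.{u, u} (P.complex.X n)).2 (P.projective n)
  inferInstance

lemma subsingleton_tor_one_iff_exact (X : ModuleCat.{u} R) :
    Subsingleton (((Tor (ModuleCat.{u} R) 1).obj X).obj Y) ↔
      Function.Exact (lTensor X (P.complex.d 2 1).hom) (lTensor X (P.complex.d 1 0).hom) := by
  let F := (MonoidalCategory.tensoringLeft (ModuleCat.{u} R)).obj X
  rw [← ModuleCat.isZero_iff_subsingleton]
  refine (P.isoLeftDerivedObj F 1).isZero_iff.trans ?_
  refine (HomologicalComplex.exactAt_iff_isZero_homology _ 1).symm.trans ?_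
  rw [HomologicalComplex.exactAt_iff' _ 2 1 0 (by simp only [ChainComplex.prev]; rfl) (by simp)]
  exact ShortComplex.ShortExact.moduleCat_exact_iff_function_exact _

lemma subsingleton_tor_one_iff_injective (X : ModuleCat.{u} R) :
    Subsingleton (((Tor (ModuleCat.{u} R) 1).obj X).obj Y) ↔
      Function.Injective (lTensor X (range (P.complex.d 1 0).hom).subtype) :=
  (P.subsingleton_tor_one_iff_exact X).trans
    (exact_lTensor_iff_injective_lTensor_subtype_range X P.exact_d_hom)

end CategoryTheory.ProjectiveResolution

theorem subsingleton_tor_one_comm {R : Type u} [CommRing R] (X Y : ModuleCat.{u} R) :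
    Subsingleton (((Tor (ModuleCat.{u} R) 1).obj X).obj Y) ↔
      Subsingleton (((Tor (ModuleCat.{u} R) 1).obj Y).obj X) := by
  obtain ⟨P⟩ := HasProjectiveResolution.out (Z := Y)
  obtain ⟨Q⟩ := HasProjectiveResolution.out (Z := X)
  rw [P.subsingleton_tor_one_iff_injective, Q.subsingleton_tor_one_iff_injective]
  exact injective_lTensor_iff_injective_lTensor_of_flat (Submodule.injective_subtype _)
    P.surjective_π_f_zero_hom P.exact_subtype_range_d_π_f_zero_hom (Submodule.injective_subtype _)
    Q.surjective_π_f_zero_hom Q.exact_subtype_range_d_π_f_zero_hom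

theorem phiIF_iff_phiTorsion_phiCopureFlat_general (R : Type u) [CommRing R] :
    (∀ (M : Type u) [AddCommGroup M] [Module R M],
        IsNonnilInjective R M → IsPhiFlat R M) ↔
      ∀ (T : Type u) [AddCommGroup T] [Module R T], IsPhiTorsion R T →
        ∀ (E : Type u) [AddCommGroup E] [Module R E], IsNonnilInjective R E →
          Subsingleton (((Tor (ModuleCat.{u} R) 1).obj (ModuleCat.of R E)).obj
            (ModuleCat.of R T)) := by
  constructor
  · intro h T _ _ hT E _ _ hE
    exact (subsingleton_tor_one_comm _ _).1 (h E hE T hT)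
  · intro h M _ _ hM T _ _ hT
    exact (subsingleton_tor_one_comm _ _).1 (h T hT M hM)

/-- A φ-ring `R` is a φ-IF ring if and only if every φ-torsion module
is φ-copure flat, i.e. `Tor₁ᴿ(E,T) = 0` for every φ-torsion `T` and nonnil-injective
`E`. -/
theorem phiIF_iff_phiTorsion_phiCopureFlat (R : Type u) [CommRing R]
    (hR : IsPhiRing R) :
    (∀ (M : Type u) [AddCommGroup M] [Module R M],
        IsNonnilInjective R M → IsPhiFlat R M) ↔
      ∀ (T : Type u) [AddCommGroup T] [Module R T], IsPhiTorsion R T →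
        ∀ (E : Type u) [AddCommGroup E] [Module R E], IsNonnilInjective R E →
          Subsingleton (((Tor (ModuleCat.{u} R) 1).obj (ModuleCat.of R E)).obj
            (ModuleCat.of R T)) :=
  phiIF_iff_phiTorsion_phiCopureFlat_general R
end

section
/- Let R be a φ-ring. Then R/Nil(R) is a Prüfer domain (i.e., every nonzero finitely generated ideal of the domain R/Nil(R) is invertible as a fractional ideal) if and only if R/I is an IF ring for every finitely generated nonnil ideal I of R. -/
universe u

set_option maxHeartbeats 1000000
set_option synthInstance.maxHeartbeats 400000
set_option linter.unusedSectionVars false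

/-- A ring is an IF ring if every injective module over it is flat. -/
def IsIFRing (S : Type u) [CommRing S] : Prop :=
  ∀ (M : Type u) [AddCommGroup M] [Module S M], Module.Injective S M → Module.Flat S M

/-- A (domain) `D` is Prüfer if every nonzero finitely generated ideal is invertible as
a fractional ideal. -/
def IsPruferDomain (D : Type u) [CommRing D] : Prop :=
  ∀ I : Ideal D, I.FG → I ≠ ⊥ →
    IsUnit (I : FractionalIdeal (nonZeroDivisors D) (FractionRing D))

section Purity

variable {T : Type u} [CommRing T]

@[simps] def evalCM (M : Type*) [AddCommGroup M] [Module T M] :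
    M →ₗ[T] CharacterModule (CharacterModule M) where
  toFun m :=
    { toFun := fun c => c m
      map_zero' := rfl
      map_add' := fun c c' => rfl }
  map_add' m m' := by ext c; exact c.map_add m m'
  map_smul' r m := by ext c; rfl

theorem purity_lTensor_evalCM (N : Type u) [AddCommGroup N] [Module T N] :
    Function.Injective (LinearMap.lTensor N (evalCM (T := T) T)) := by
  rw [← CharacterModule.dual_surjective_iff_injective]
  intro χ
  refine ⟨CharacterModule.uncurry
    ((evalCM (T := T) (CharacterModule T)) ∘ₗ (CharacterModule.curry χ)), ?_⟩
  ext z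
  induction z using TensorProduct.induction_on with
  | zero => simp [map_zero]
  | tmul n t => rfl
  | add x y hx hy =>
      rw [map_add]
      exact congr($(hx) + $(hy)) |>.trans (map_add χ x y).symm

/-- Descent along the pure embedding `T → T⋆⋆`. -/
theorem mem_ideal_of_evalCM {k : ℕ} {I : Ideal T} {w : T} (x : Fin k → T)
    (hx : ∀ i, x i ∈ I) (ξ : Fin k → CharacterModule (CharacterModule T))
    (h : evalCM (T := T) T w = ∑ i, x i • ξ i) : w ∈ I := by
  let N : Type u := T ⧸ I
  let q : T →ₗ[T] N := Submodule.mkQ (I : Submodule T T)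
  have hzero : (q w) ⊗ₜ[T] (evalCM (T := T) T 1)
      = (0 : TensorProduct T N (CharacterModule (CharacterModule T))) := by
    have e1 : q w = w • q 1 := by rw [← map_smul]; congr 1; simp
    rw [e1, TensorProduct.smul_tmul, ← map_smul]
    have e2 : w • (1 : T) = w := by simp
    rw [e2, h, TensorProduct.tmul_sum]
    refine Finset.sum_eq_zero fun i _ => ?_
    rw [← TensorProduct.smul_tmul, ← map_smul]
    have e3 : x i • (1 : T) = x i := by simp
    rw [e3]
    have hq : q (x i) = 0 := by
      rw [Submodule.mkQ_apply, Submodule.Quotient.mk_eq_zero]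
      exact hx i
    rw [hq, TensorProduct.zero_tmul]
  have h2 : (q w) ⊗ₜ[T] (1 : T) = (0 : TensorProduct T N T) := by
    apply purity_lTensor_evalCM N
    rw [map_zero]
    rw [show (LinearMap.lTensor N (evalCM (T := T) T)) ((q w) ⊗ₜ[T] (1 : T))
      = (q w) ⊗ₜ[T] (evalCM (T := T) T 1) from LinearMap.lTensor_tmul _ _ _ _]
    exact hzero
  have h3 : q w = 0 := by
    have := congrArg (TensorProduct.rid T N) h2
    rwa [map_zero, TensorProduct.rid_tmul, one_smul] at this
  rwa [Submodule.mkQ_apply, Submodule.Quotient.mk_eq_zero] at h3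

theorem mem_span_of_ann (hIF : IsIFRing T) {k : ℕ} (x : Fin k → T) (w : T)
    (hw : ∀ u : T, (∀ i, u * x i = 0) → u * w = 0) :
    w ∈ Ideal.span (Set.range x) := by
  classical
  have injTd : Module.Injective T (CharacterModule T) :=
    Module.Flat.iff_characterModule_injective.mp (Module.Flat.self (R := T))
  have flatTd : Module.Flat T (CharacterModule T) := hIF _ injTd
  have injTdd : Module.Injective T (CharacterModule (CharacterModule T)) :=
    Module.Flat.iff_characterModule_injective.mp flatTd
  let ρ : T →ₗ[T] (Fin k → T) := LinearMap.pi (fun i => (x i) • LinearMap.id)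
  have hρ_apply : ∀ t i, ρ t i = x i * t := fun t i => rfl
  have hker : LinearMap.ker ρ ≤ LinearMap.ker ((w : T) • (LinearMap.id : T →ₗ[T] T)) := by
    intro u hu
    simp only [LinearMap.mem_ker] at hu ⊢
    have h4 : ∀ i, u * x i = 0 := by
      intro i
      have := congrFun (congrArg (fun z => (z : Fin k → T)) hu) i
      simpa [hρ_apply, mul_comm] using this
    simpa [smul_eq_mul, mul_comm] using hw u h4
  let φ : (T ⧸ LinearMap.ker ρ) →ₗ[T] T :=
    Submodule.liftQ _ ((w : T) • (LinearMap.id : T →ₗ[T] T)) hker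
  let ι : (T ⧸ LinearMap.ker ρ) →ₗ[T] (Fin k → T) :=
    Submodule.liftQ _ ρ (le_refl _)
  have hι_inj : Function.Injective ι := by
    rw [← LinearMap.ker_eq_bot]
    exact Submodule.ker_liftQ_eq_bot _ _ _ (le_refl _)
  obtain ⟨h', hh'⟩ := injTdd.out ι hι_inj ((evalCM (T := T) T) ∘ₗ φ)
  refine mem_ideal_of_evalCM x (fun i => Ideal.subset_span ⟨i, rfl⟩)
    (fun i => h' (Pi.single i 1)) ?_
  have h1 : evalCM (T := T) T w = h' (ι (Submodule.Quotient.mk 1)) := by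
    rw [hh']
    have : φ (Submodule.Quotient.mk (1 : T)) = w := by
      rw [Submodule.liftQ_apply]
      simp
    rw [LinearMap.comp_apply, this]
  have h2 : ι (Submodule.Quotient.mk (1 : T)) = fun i => x i := by
    rw [Submodule.liftQ_apply]
    ext i
    rw [hρ_apply, mul_one]
  have h3 : (fun i => x i) = ∑ i, x i • (Pi.single i (1 : T) : Fin k → T) := by
    have : ∀ i, x i • (Pi.single i (1 : T) : Fin k → T) = Pi.single i (x i) := by
      intro i
      rw [← Pi.single_smul, smul_eq_mul, mul_one]
    rw [Finset.sum_congr rfl fun i _ => this i, Finset.univ_sum_single]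
  rw [h1, h2, h3, map_sum]
  refine Finset.sum_congr rfl fun i _ => ?_
  rw [map_smul]

end Purity

section Backward

variable {D : Type u} [CommRing D] [IsDomain D]

/-- The consequence of the IF hypothesis that we use: a "double annihilator modulo any
nonzero f.g. ideal" condition. -/
def AnnHyp (D : Type u) [CommRing D] : Prop :=
  ∀ (J : Ideal D), J.FG → J ≠ ⊥ → ∀ (k : ℕ) (x : Fin k → D) (w : D),
    (∀ u : D, (∀ i, u * x i ∈ J) → u * w ∈ J) → w ∈ Ideal.span (Set.range x) ⊔ J

theorem AnnHyp.div_of_sq (hH : AnnHyp D) (p q α β : D) (hq : q ≠ 0)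
    (hrel : p ^ 2 = α * p * q + β * q ^ 2) : ∃ t, p = q * t := by
  have hJfg : (Ideal.span ({p * q, q * q} : Set D)).FG :=
    Submodule.fg_span (Set.toFinite _)
  have hJne : Ideal.span ({p * q, q * q} : Set D) ≠ ⊥ := by
    intro hbot
    have : q * q ∈ (⊥ : Ideal D) := by
      rw [← hbot]
      exact Ideal.subset_span (by simp)
    exact mul_ne_zero hq hq (Ideal.mem_bot.mp this)
  have key := hH _ hJfg hJne 1 (fun _ => q) p ?_
  · rw [Set.range_const] at key
    have hle : Ideal.span ({p * q, q * q} : Set D) ≤ Ideal.span {q} := by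
      rw [Ideal.span_le]
      rintro z (rfl | rfl)
      · exact Ideal.mem_span_singleton.mpr ⟨p, mul_comm p q⟩
      · exact Ideal.mem_span_singleton.mpr ⟨q, rfl⟩
    rw [sup_eq_left.mpr hle] at key
    obtain ⟨t, ht⟩ := Ideal.mem_span_singleton'.mp key
    exact ⟨t, by rw [← ht, mul_comm]⟩
  · intro u hu
    have hu0 : u * q ∈ Ideal.span ({p * q, q * q} : Set D) := hu 0
    obtain ⟨y, z, hyz⟩ := Ideal.mem_span_pair.mp hu0
    have hu' : u = y * p + z * q := by
      have hcancel : (y * p + z * q) * q = u * q := by linear_combination hyz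
      exact (mul_right_cancel₀ hq hcancel).symm
    refine Ideal.mem_span_pair.mpr ⟨y * α + z, y * β, ?_⟩
    rw [hu']
    linear_combination (-y) * hrel

theorem AnnHyp.mul_mem_sq (hH : AnnHyp D) (a b : D) (ha : a ≠ 0) (hb : b ≠ 0) :
    ∃ u v, u * a ^ 2 + v * b ^ 2 = a * b := by
  have hab2 : a ^ 2 * b ^ 2 ≠ 0 := mul_ne_zero (pow_ne_zero 2 ha) (pow_ne_zero 2 hb)
  have hJfg : (Ideal.span ({a ^ 2 * b ^ 2} : Set D)).FG := Submodule.fg_span (Set.toFinite _)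
  have hJne : Ideal.span ({a ^ 2 * b ^ 2} : Set D) ≠ ⊥ := by
    intro hbot
    have : a ^ 2 * b ^ 2 ∈ (⊥ : Ideal D) := by
      rw [← hbot]; exact Ideal.subset_span rfl
    exact hab2 (Ideal.mem_bot.mp this)
  have key := hH _ hJfg hJne 2 ![a ^ 2, b ^ 2] (a * b) ?_
  · have hrange : Set.range ![a ^ 2, b ^ 2] = {a ^ 2, b ^ 2} := by
      ext t
      constructor
      · rintro ⟨i, rfl⟩
        fin_cases i <;> simp
      · rintro (rfl | rfl)
        · exact ⟨0, rfl⟩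
        · exact ⟨1, rfl⟩
    rw [hrange] at key
    have hle : Ideal.span ({a ^ 2 * b ^ 2} : Set D) ≤ Ideal.span ({a ^ 2, b ^ 2} : Set D) := by
      rw [Ideal.span_le]
      rintro z rfl
      exact Ideal.mem_span_pair.mpr ⟨b ^ 2, 0, by ring⟩
    rw [sup_eq_left.mpr hle] at key
    exact Ideal.mem_span_pair.mp key
  · intro u hu
    obtain ⟨c, hc⟩ := Ideal.mem_span_singleton.mp (by simpa using hu 0)
    obtain ⟨c', hc'⟩ := Ideal.mem_span_singleton.mp (by simpa using hu 1)
    -- u = b^2 * c and u = a^2 * c'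
    have h1 : u = b ^ 2 * c := by
      have := hc
      have hcan : a ^ 2 * u = a ^ 2 * (b ^ 2 * c) := by linear_combination this
      exact mul_left_cancel₀ (pow_ne_zero 2 ha) hcan
    have h2 : u = a ^ 2 * c' := by
      have hcan : b ^ 2 * u = b ^ 2 * (a ^ 2 * c') := by linear_combination hc'
      exact mul_left_cancel₀ (pow_ne_zero 2 hb) hcan
    have hsq : u ^ 2 = 0 * u * (a * b) + (c * c') * (a * b) ^ 2 := by
      calc u ^ 2 = (b ^ 2 * c) * (a ^ 2 * c') := by rw [← h1, ← h2]; ring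
      _ = 0 * u * (a * b) + (c * c') * (a * b) ^ 2 := by ring
    obtain ⟨t, ht⟩ := hH.div_of_sq u (a * b) 0 (c * c') (mul_ne_zero ha hb) hsq
    exact Ideal.mem_span_singleton.mpr ⟨t, by rw [ht]; ring⟩

theorem AnnHyp.exists_split (hH : AnnHyp D) (a b : D) (ha : a ≠ 0) (hb : b ≠ 0) :
    ∃ d d' u v, d + d' = 1 ∧ d * b = a * u ∧ d' * a = b * v := by
  obtain ⟨u, v, hab⟩ := hH.mul_mem_sq a b ha hb
  have h1 : (u * a) ^ 2 = 1 * (u * a) * b + (-(u * v)) * b ^ 2 := by linear_combination u * hab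
  have h2 : (v * b) ^ 2 = 1 * (v * b) * a + (-(u * v)) * a ^ 2 := by linear_combination v * hab
  obtain ⟨d, hd⟩ := hH.div_of_sq (u * a) b 1 (-(u * v)) hb h1
  obtain ⟨d', hd'⟩ := hH.div_of_sq (v * b) a 1 (-(u * v)) ha h2
  refine ⟨d, d', u, v, ?_, ?_, ?_⟩
  · have : a * b * (d + d') = a * b * 1 := by
      calc a * b * (d + d') = a * (b * d) + b * (a * d') := by ring
      _ = a * (u * a) + b * (v * b) := by rw [← hd, ← hd']
      _ = u * a ^ 2 + v * b ^ 2 := by ring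
      _ = a * b := hab
      _ = a * b * 1 := by ring
    exact mul_left_cancel₀ (mul_ne_zero ha hb) this
  · rw [mul_comm d b, ← hd]; ring
  · rw [mul_comm d' a, ← hd']; ring

/-- The product of `(a,b)` with a suitable f.g. ideal is a nonzero principal ideal. -/
theorem AnnHyp.pair_mul_eq_span (hH : AnnHyp D) (a b : D) (ha : a ≠ 0) (hb : b ≠ 0) :
    ∃ X : Ideal D, Ideal.span ({a, b} : Set D) * X = Ideal.span {a * b} := by
  obtain ⟨d, d', u, v, hdd, hdb, hd'a⟩ := hH.exists_split a b ha hb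
  refine ⟨Ideal.span ({b * d, a * d'} : Set D), le_antisymm ?_ ?_⟩
  · have expand : Ideal.span ({a, b} : Set D) * Ideal.span ({b * d, a * d'} : Set D)
        = Ideal.span {a * (b * d)} ⊔ Ideal.span {a * (a * d')}
          ⊔ (Ideal.span {b * (b * d)} ⊔ Ideal.span {b * (a * d')}) := by
      rw [show Ideal.span ({a, b} : Set D) = Ideal.span {a} ⊔ Ideal.span {b} from
          Ideal.span_insert a {b},
        show Ideal.span ({b * d, a * d'} : Set D)
          = Ideal.span {b * d} ⊔ Ideal.span {a * d'} from Ideal.span_insert _ _]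
      rw [Ideal.sup_mul, Ideal.mul_sup, Ideal.mul_sup]
      simp only [Ideal.span_singleton_mul_span_singleton]
    rw [expand]
    have mem1 : a * (b * d) ∈ Ideal.span ({a * b} : Set D) :=
      Ideal.mem_span_singleton.mpr ⟨d, by ring⟩
    have mem2 : a * (a * d') ∈ Ideal.span ({a * b} : Set D) := by
      refine Ideal.mem_span_singleton.mpr ⟨v, ?_⟩
      calc a * (a * d') = a * (d' * a) := by ring
      _ = a * (b * v) := by rw [hd'a]
      _ = a * b * v := by ring
    have mem3 : b * (b * d) ∈ Ideal.span ({a * b} : Set D) := by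
      refine Ideal.mem_span_singleton.mpr ⟨u, ?_⟩
      calc b * (b * d) = b * (d * b) := by ring
      _ = b * (a * u) := by rw [hdb]
      _ = a * b * u := by ring
    have mem4 : b * (a * d') ∈ Ideal.span ({a * b} : Set D) :=
      Ideal.mem_span_singleton.mpr ⟨d', by ring⟩
    refine sup_le (sup_le ?_ ?_) (sup_le ?_ ?_) <;>
      rw [Ideal.span_singleton_le_iff_mem]
    exacts [mem1, mem2, mem3, mem4]
  · rw [Ideal.span_singleton_le_iff_mem]
    have : a * b = a * (b * d) + b * (a * d') := by
      calc a * b = a * b * (d + d') := by rw [hdd]; ring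
      _ = a * (b * d) + b * (a * d') := by ring
    rw [this]
    refine Ideal.add_mem _ ?_ ?_
    · exact Ideal.mul_mem_mul (Ideal.subset_span (by simp)) (Ideal.subset_span (by simp))
    · exact Ideal.mul_mem_mul (Ideal.subset_span (by simp)) (Ideal.subset_span (by simp))

/-- The three-ideal identity, valid in any commutative ring. -/
theorem ideal_three_identity (X Y Z : Ideal D) :
    (X + Y) * (Y + Z) * (Z + X) = (X + Y + Z) * (X * Y + Y * Z + Z * X) := by
  have habs : (X + Y) * (Y + Z) * (Z + X) + X * Y * Z = (X + Y) * (Y + Z) * (Z + X) := by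
    rw [Ideal.add_eq_sup, sup_eq_left]
    have h1 : X ≤ X + Y := by rw [Ideal.add_eq_sup]; exact le_sup_left
    have h2 : Y ≤ Y + Z := by rw [Ideal.add_eq_sup]; exact le_sup_left
    have h3 : Z ≤ Z + X := by rw [Ideal.add_eq_sup]; exact le_sup_left
    exact Ideal.mul_mono (Ideal.mul_mono h1 h2) h3
  rw [← habs]
  ring

theorem isUnit_coeIdeal_span_singleton_of_ne_zero {a : D} (ha : a ≠ 0) :
    IsUnit ((Ideal.span {a} : Ideal D) :
      FractionalIdeal (nonZeroDivisors D) (FractionRing D)) := by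
  rw [FractionalIdeal.coeIdeal_span_singleton]
  have halg : (algebraMap D (FractionRing D)) a ≠ 0 := fun h =>
    ha ((IsFractionRing.to_map_eq_zero_iff (K := FractionRing D)).mp h)
  refine IsUnit.of_mul_eq_one
    (FractionalIdeal.spanSingleton _ ((algebraMap D (FractionRing D)) a)⁻¹) ?_
  rw [FractionalIdeal.spanSingleton_mul_spanSingleton, mul_inv_cancel₀ halg,
    FractionalIdeal.spanSingleton_one]

theorem isUnit_coeIdeal_of_mul_eq_span {I X : Ideal D} {c : D} (hc : c ≠ 0)
    (h : I * X = Ideal.span {c}) :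
    IsUnit (I : FractionalIdeal (nonZeroDivisors D) (FractionRing D)) := by
  have h2 : (I : FractionalIdeal (nonZeroDivisors D) (FractionRing D)) * X
      = ((Ideal.span {c} : Ideal D) : FractionalIdeal (nonZeroDivisors D) (FractionRing D)) := by
    rw [← FractionalIdeal.coeIdeal_mul, h]
  exact isUnit_of_mul_isUnit_left (x := (I : FractionalIdeal (nonZeroDivisors D) (FractionRing D)))
    (y := (X : FractionalIdeal (nonZeroDivisors D) (FractionRing D)))
    (by rw [h2]; exact isUnit_coeIdeal_span_singleton_of_ne_zero hc)

theorem AnnHyp.isUnit_span_finset (hH : AnnHyp D) :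
    ∀ (n : ℕ) (s : Finset D), s.card = n → (∀ x ∈ s, x ≠ 0) → s.Nonempty →
    IsUnit ((Ideal.span (s : Set D) : Ideal D) :
      FractionalIdeal (nonZeroDivisors D) (FractionRing D)) := by
  classical
  intro n
  induction n using Nat.strong_induction_on with
  | _ n IH =>
    intro s hcard hnz hne
    match n, hcard with
    | 0, hcard => exact absurd (Finset.card_eq_zero.mp hcard ▸ hne) (by simp)
    | 1, hcard => 
      obtain ⟨y, rfl⟩ := Finset.card_eq_one.mp hcard
      have hy : y ≠ 0 := hnz y (by simp)
      simpa using isUnit_coeIdeal_span_singleton_of_ne_zero hy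
    | 2, hcard =>
      obtain ⟨y, z, hyz, rfl⟩ := Finset.card_eq_two.mp hcard
      have hy : y ≠ 0 := hnz y (by simp)
      have hz : z ≠ 0 := hnz z (by simp)
      obtain ⟨X, hX⟩ := hH.pair_mul_eq_span y z hy hz
      have : Ideal.span (({y, z} : Finset D) : Set D) = Ideal.span ({y, z} : Set D) := by
        norm_cast
      rw [this]
      exact isUnit_coeIdeal_of_mul_eq_span (mul_ne_zero hy hz) hX
    | (m + 3), hcard =>
      -- pick two elements
      obtain ⟨y, hy⟩ := hne
      have htne : (s.erase y).Nonempty := by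
        rw [← Finset.card_pos, Finset.card_erase_of_mem hy, hcard]; omega
      obtain ⟨z, hz⟩ := htne
      have hzy : z ≠ y := Finset.ne_of_mem_erase hz
      set t' : Finset D := (s.erase y).erase z with ht'
      have hynt' : y ∉ t' := fun h => (Finset.notMem_erase y s)
        (Finset.mem_of_mem_erase h)
      have hznt' : z ∉ t' := Finset.notMem_erase z _
      have ht'card : t'.card = m + 1 := by
        rw [ht', Finset.card_erase_of_mem hz, Finset.card_erase_of_mem hy, hcard]
        omega
      have ht'sub : t' ⊆ s := fun a ha =>
        Finset.mem_of_mem_erase (Finset.mem_of_mem_erase ha)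
      set X : Ideal D := Ideal.span (t' : Set D) with hXdef
      set Y : Ideal D := Ideal.span ({y} : Set D) with hYdef
      set Z : Ideal D := Ideal.span ({z} : Set D) with hZdef
      have hs_decomp : (s : Set D) = insert y (insert z (t' : Set D)) := by
        rw [ht']
        rw [← Finset.coe_insert, ← Finset.coe_insert, Finset.insert_erase hz,
          Finset.insert_erase hy]
      have hA : Ideal.span (s : Set D) = X + Y + Z := by
        rw [hs_decomp, Ideal.span_insert, Ideal.span_insert, hXdef, hYdef, hZdef,
          Ideal.add_eq_sup, Ideal.add_eq_sup]
        ac_rfl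
      -- the three smaller ideals
      have hXY : X + Y = Ideal.span ((insert y t' : Finset D) : Set D) := by
        rw [Finset.coe_insert, Ideal.span_insert, Ideal.add_eq_sup, sup_comm]
      have hZX : Z + X = Ideal.span ((insert z t' : Finset D) : Set D) := by
        rw [Finset.coe_insert, Ideal.span_insert, Ideal.add_eq_sup]
      have hYZ : Y + Z = Ideal.span (({y, z} : Finset D) : Set D) := by
        rw [Finset.coe_insert, Finset.coe_singleton, Ideal.span_insert, Ideal.add_eq_sup]
      have u1 : IsUnit ((X + Y : Ideal D) :
          FractionalIdeal (nonZeroDivisors D) (FractionRing D)) := by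
        rw [hXY]
        refine IH (m + 2) (by omega) _ ?_ ?_ ?_
        · rw [Finset.card_insert_of_notMem hynt', ht'card]
        · intro x hx
          rcases Finset.mem_insert.mp hx with rfl | hx
          · exact hnz x hy
          · exact hnz x (ht'sub hx)
        · exact ⟨y, Finset.mem_insert_self y t'⟩
      have u3 : IsUnit ((Z + X : Ideal D) :
          FractionalIdeal (nonZeroDivisors D) (FractionRing D)) := by
        rw [hZX]
        refine IH (m + 2) (by omega) _ ?_ ?_ ?_
        · rw [Finset.card_insert_of_notMem hznt', ht'card]
        · intro x hx
          rcases Finset.mem_insert.mp hx with rfl | hx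
          · exact hnz x (Finset.mem_of_mem_erase hz)
          · exact hnz x (ht'sub hx)
        · exact ⟨z, Finset.mem_insert_self z t'⟩
      have u2 : IsUnit ((Y + Z : Ideal D) :
          FractionalIdeal (nonZeroDivisors D) (FractionRing D)) := by
        rw [hYZ]
        refine IH 2 (by omega) _ ?_ ?_ ?_
        · rw [Finset.card_insert_of_notMem (by simpa using hzy.symm), Finset.card_singleton]
        · intro x hx
          rcases Finset.mem_insert.mp hx with rfl | hx
          · exact hnz x hy
          · rw [Finset.mem_singleton] at hx
            subst hx
            exact hnz x (Finset.mem_of_mem_erase hz)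
        · exact ⟨y, Finset.mem_insert_self y _⟩
      -- combine
      have hid := ideal_three_identity X Y Z
      have hprod : IsUnit (((X + Y) * (Y + Z) * (Z + X) : Ideal D) :
          FractionalIdeal (nonZeroDivisors D) (FractionRing D)) := by
        rw [FractionalIdeal.coeIdeal_mul, FractionalIdeal.coeIdeal_mul]
        exact (u1.mul u2).mul u3
      rw [hid, FractionalIdeal.coeIdeal_mul] at hprod
      have := isUnit_of_mul_isUnit_left hprod
      rwa [← hA] at this

theorem AnnHyp.isPrufer (hH : AnnHyp D) : IsPruferDomain D := by
  classical
  intro I hfg hne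
  obtain ⟨s, hs⟩ := hfg
  have hspan : Ideal.span ((s.erase 0 : Finset D) : Set D) = I := by
    by_cases h0 : (0 : D) ∈ s
    · rw [← hs]
      conv_rhs => rw [← Finset.insert_erase h0]
      rw [Finset.coe_insert]
      exact (Submodule.span_insert_zero).symm
    · rw [Finset.erase_eq_of_notMem h0, hs]
  have hnz : ∀ x ∈ s.erase 0, x ≠ 0 := fun x hx => Finset.ne_of_mem_erase hx
  have hnonempty : (s.erase 0).Nonempty := by
    rcases Finset.eq_empty_or_nonempty (s.erase 0) with h | h
    · exfalso
      apply hne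
      rw [← hspan, h]
      simp
    · exact h
  have := hH.isUnit_span_finset (s.erase 0).card (s.erase 0) rfl hnz hnonempty
  rwa [hspan] at this

end Backward

section Forward

variable {D : Type u} [CommRing D] [IsDomain D]

theorem exists_inverse_system (hD : IsPruferDomain D) {n m : ℕ} (c : Fin n → D) (g : Fin m → D)
    (hgne : Ideal.span (Set.range g) ≠ ⊥) :
    ∃ d : Fin (n + m) → Fin (n + m) → D,
      (∀ j, ∑ i, d i j * (Fin.append c g) i = (Fin.append c g) j) ∧
      (∀ x : Fin (n + m) → D,
        (∀ j, x j - (∑ i, d i j * x i) ∈ Ideal.span (Set.range g)) →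
        (∀ l, (∑ i, d i (Fin.natAdd n l) * x i) ∈ Ideal.span (Set.range g)) →
        ∃ s, ∀ i, x i - s * (Fin.append c g) i ∈ Ideal.span (Set.range g)) := by
  classical
  set K := FractionRing D
  set alg : D →+* K := algebraMap D K with halg
  have halg_inj : Function.Injective alg := IsFractionRing.injective D K
  set J : Ideal D := Ideal.span (Set.range g) with hJ
  set C : Fin (n + m) → D := Fin.append c g with hC
  set A : Ideal D := Ideal.span (Set.range C) with hA
  have hCg : ∀ l, C (Fin.natAdd n l) = g l := fun l => Fin.append_right c g l
  have hJle : J ≤ A := by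
    rw [hJ, hA, Ideal.span_le]
    rintro z ⟨l, rfl⟩
    exact Ideal.subset_span ⟨Fin.natAdd n l, Fin.append_right c g l⟩
  have hAne : A ≠ ⊥ := fun h => hgne (by rw [← le_bot_iff, ← h]; exact hJle)
  have hAu : IsUnit (A : FractionalIdeal (nonZeroDivisors D) K) :=
    hD A (Submodule.fg_span (Set.finite_range C)) hAne
  have hJu : IsUnit (J : FractionalIdeal (nonZeroDivisors D) K) :=
    hD J (Submodule.fg_span (Set.finite_range g)) hgne
  obtain ⟨U, hU⟩ := hAu
  set B : FractionalIdeal (nonZeroDivisors D) K := ↑U⁻¹ with hB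
  have hAB : (A : FractionalIdeal (nonZeroDivisors D) K) * B = 1 := by
    rw [hB, ← hU, ← Units.val_mul, mul_inv_cancel, Units.val_one]
  have hone : (1 : K) ∈ ((A : FractionalIdeal (nonZeroDivisors D) K) : Submodule D K)
      * (B : Submodule D K) := by
    rw [← FractionalIdeal.coe_mul, hAB, FractionalIdeal.coe_one, Submodule.one_eq_span]
    exact Submodule.subset_span rfl
  have hrep : ∀ z ∈ ((A : FractionalIdeal (nonZeroDivisors D) K) : Submodule D K)
      * (B : Submodule D K),
      ∃ q : Fin (n + m) → K, (∀ i, q i ∈ B) ∧ z = ∑ i, alg (C i) * q i := by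
    intro z hz
    refine Submodule.mul_induction_on hz ?_ ?_
    · intro x hx y hy
      rw [FractionalIdeal.mem_coe, FractionalIdeal.mem_coeIdeal] at hx
      obtain ⟨a', ha', rfl⟩ := hx
      rw [hA] at ha'
      obtain ⟨f, hf⟩ := (Submodule.mem_span_range_iff_exists_fun D).mp ha'
      refine ⟨fun i => f i • y, fun i => ?_, ?_⟩
      · show f i • y ∈ B
        exact FractionalIdeal.mem_coe.mp (Submodule.smul_mem _ (f i) hy)
      · show alg a' * y = ∑ i, alg (C i) * (f i • y)
        have hfa : ∑ i, alg (f i) * alg (C i) = alg a' := by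
          rw [← hf, map_sum]
          refine Finset.sum_congr rfl fun i _ => ?_
          rw [smul_eq_mul, map_mul]
        rw [← hfa, Finset.sum_mul]
        refine Finset.sum_congr rfl fun i _ => ?_
        rw [Algebra.smul_def]
        show alg (f i) * alg (C i) * y = alg (C i) * ((algebraMap D K) (f i) * y)
        ring
    · rintro x y ⟨qx, hqx, rfl⟩ ⟨qy, hqy, rfl⟩
      refine ⟨fun i => qx i + qy i, fun i => ?_, ?_⟩
      · show qx i + qy i ∈ B
        exact FractionalIdeal.mem_coe.mp (Submodule.add_mem _
          (FractionalIdeal.mem_coe.mpr (hqx i)) (FractionalIdeal.mem_coe.mpr (hqy i)))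
      · show _ = ∑ i, alg (C i) * (qx i + qy i)
        rw [← Finset.sum_add_distrib]
        refine Finset.sum_congr rfl fun i _ => ?_
        ring
  obtain ⟨q, hqB, hq1⟩ := hrep 1 hone
  have hd_ex : ∀ i j, ∃ dd : D, alg dd = q i * alg (C j) := by
    intro i j
    have hqi : q i ∈ (B : Submodule D K) := by
      rw [FractionalIdeal.mem_coe]; exact hqB i
    have hCj : alg (C j) ∈ ((A : FractionalIdeal (nonZeroDivisors D) K) : Submodule D K) := by
      rw [FractionalIdeal.mem_coe, FractionalIdeal.mem_coeIdeal]
      exact ⟨C j, Ideal.subset_span ⟨j, rfl⟩, rfl⟩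
    have hmem : q i * alg (C j) ∈ (B : Submodule D K)
        * ((A : FractionalIdeal (nonZeroDivisors D) K) : Submodule D K) :=
      Submodule.mul_mem_mul hqi hCj
    rw [← FractionalIdeal.coe_mul, mul_comm B, hAB, FractionalIdeal.coe_one] at hmem
    exact (Submodule.mem_one).mp hmem
  choose d hd using hd_ex
  have hCd : ∀ j, ∑ i, d i j * C i = C j := by
    intro j
    apply halg_inj
    rw [map_sum]
    have : ∀ i, alg (d i j * C i) = alg (C j) * (alg (C i) * q i) := fun i => by
      rw [map_mul, hd]; ring
    rw [Finset.sum_congr rfl fun i _ => this i, ← Finset.mul_sum, ← hq1, mul_one]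
  refine ⟨d, hCd, ?_⟩
  -- the key kernel claim
  intro x hxa hxb
  set τ : K := ∑ i, q i * alg (x i) with hτ
  -- τ multiplies J into J
  have hτg : ∀ l, τ * alg (g l) = alg (∑ i, d i (Fin.natAdd n l) * x i) := by
    intro l
    rw [map_sum]
    have : ∀ i, alg (d i (Fin.natAdd n l) * x i) = (q i * alg (x i)) * alg (g l) := fun i => by
      rw [map_mul, hd, hCg]; ring
    rw [Finset.sum_congr rfl fun i _ => this i, ← Finset.sum_mul, hτ]
  have hτJ : FractionalIdeal.spanSingleton (nonZeroDivisors D) τ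
      * (J : FractionalIdeal (nonZeroDivisors D) K) ≤ (J : FractionalIdeal (nonZeroDivisors D) K) := by
    rw [FractionalIdeal.mul_le]
    intro i' hi' j' hj'
    obtain ⟨dd, rfl⟩ := (FractionalIdeal.mem_spanSingleton _).mp hi'
    obtain ⟨jj, hjj, rfl⟩ := (FractionalIdeal.mem_coeIdeal _).mp hj'
    rw [hJ] at hjj
    obtain ⟨t, ht⟩ := (Submodule.mem_span_range_iff_exists_fun D).mp hjj
    have hτjj : τ * alg jj = alg (∑ l, t l * (∑ i, d i (Fin.natAdd n l) * x i)) := by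
      rw [← ht, map_sum, Finset.mul_sum, map_sum]
      refine Finset.sum_congr rfl fun l _ => ?_
      rw [smul_eq_mul, map_mul, map_mul, ← mul_assoc, mul_comm τ (alg (t l)), mul_assoc, hτg l]
    rw [FractionalIdeal.mem_coeIdeal]
    refine ⟨dd * (∑ l, t l * (∑ i, d i (Fin.natAdd n l) * x i)), ?_, ?_⟩
    · exact Ideal.mul_mem_left _ _ (Ideal.sum_mem _ fun l _ => Ideal.mul_mem_left _ _ (hxb l))
    · rw [map_mul, ← hτjj, Algebra.smul_def, halg]
      ring
  -- τ is integral: τ = alg s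
  obtain ⟨V, hV⟩ := hJu
  have hτ1 : FractionalIdeal.spanSingleton (nonZeroDivisors D) τ ≤ 1 := by
    have h2 := mul_left_mono (a := (↑V⁻¹ : FractionalIdeal (nonZeroDivisors D) K)) hτJ
    simp only at h2
    rw [mul_assoc] at h2
    have hJV : (J : FractionalIdeal (nonZeroDivisors D) K)
        * (↑V⁻¹ : FractionalIdeal (nonZeroDivisors D) K) = 1 := by
      rw [← hV, ← Units.val_mul, mul_inv_cancel, Units.val_one]
    rwa [hJV, mul_one] at h2
  have hsmem : τ ∈ (1 : FractionalIdeal (nonZeroDivisors D) K) :=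
    (FractionalIdeal.spanSingleton_le_iff_mem).mp hτ1
  obtain ⟨s, hs⟩ := (FractionalIdeal.mem_one_iff _).mp hsmem
  refine ⟨s, fun j => ?_⟩
  have hsum_eq : (∑ i, d i j * x i) = s * C j := by
    apply halg_inj
    rw [map_sum]
    have : ∀ i, alg (d i j * x i) = alg (C j) * (q i * alg (x i)) := fun i => by
      rw [map_mul, hd]; ring
    rw [Finset.sum_congr rfl fun i _ => this i, ← Finset.mul_sum, ← hτ, map_mul]
    rw [← hs, halg]
    ring
  have := hxa j
  rwa [hsum_eq] at this


theorem isIFRing_of_surjective_of_prufer (hD : IsPruferDomain D) {T : Type u} [CommRing T]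
    (π : D →+* T) (hsur : Function.Surjective π)
    (hfg : (RingHom.ker π).FG) (hne : RingHom.ker π ≠ ⊥) : IsIFRing T := by
  classical
  intro M _ _ hinj
  rw [Module.Flat.iff_rTensor_injective]
  intro a hafg
  obtain ⟨n, cb, hcb⟩ := Submodule.fg_iff_exists_fin_generating_family.mp hafg
  obtain ⟨m, g, hg⟩ := Submodule.fg_iff_exists_fin_generating_family.mp hfg
  choose c hc using fun i => hsur (cb i)
  have hcb' : Ideal.span (Set.range cb) = a := hcb
  have hg' : Ideal.span (Set.range g) = RingHom.ker π := hg
  set N := n + m with hN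
  set C : Fin N → D := Fin.append c g with hC
  set v : Fin N → T := fun i => π (C i) with hv
  have hvdef : ∀ i, v i = π (C i) := fun _ => rfl
  have hgker : ∀ l, g l ∈ RingHom.ker π := fun l => hg' ▸ Ideal.subset_span ⟨l, rfl⟩
  have hCnat : ∀ l, C (Fin.natAdd n l) = g l := fun l => Fin.append_right c g l
  have hCcast : ∀ i, C (Fin.castAdd m i) = c i := fun i => Fin.append_left c g i
  have hv_natAdd : ∀ l, v (Fin.natAdd n l) = 0 := by
    intro l
    rw [hvdef, hCnat]
    exact RingHom.mem_ker.mp (hgker l)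
  have hv_castAdd : ∀ i : Fin n, v (Fin.castAdd m i) = cb i := by
    intro i
    rw [hvdef, hCcast]
    exact hc i
  have hva : Ideal.span (Set.range v) = a := by
    apply le_antisymm
    · rw [Ideal.span_le]
      rintro z ⟨i, rfl⟩
      refine Fin.addCases (fun i0 => ?_) (fun l => ?_) i
      · rw [hv_castAdd i0]
        exact hcb' ▸ Ideal.subset_span ⟨i0, rfl⟩
      · rw [hv_natAdd l]
        exact a.zero_mem
    · rw [← hcb', Ideal.span_le]
      rintro z ⟨i, rfl⟩
      exact (hv_castAdd i) ▸ Ideal.subset_span ⟨Fin.castAdd m i, rfl⟩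
  have hvmem : ∀ i, v i ∈ a := fun i => hva ▸ Ideal.subset_span ⟨i, rfl⟩
  have hgne : Ideal.span (Set.range g) ≠ ⊥ := fun h => hne (hg' ▸ h)
  obtain ⟨d, hCd, hKC⟩ := exists_inverse_system hD c g hgne
  -- relations over T
  have hrel : ∀ j, ∑ i, π (d i j) * v i = v j := by
    intro j
    have h1 : ∑ i, π (d i j) * v i = π (∑ i, d i j * C i) := by
      rw [map_sum]
      exact Finset.sum_congr rfl fun i _ => by rw [map_mul, hvdef]
    rw [h1, hCd j, hvdef]
  have hrel2 : ∀ l, ∑ i, π (d i (Fin.natAdd n l)) * v i = 0 := by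
    intro l
    rw [hrel (Fin.natAdd n l), hv_natAdd]
  -- representation of tensors
  have hzrep : ∀ z : TensorProduct T a M,
      ∃ e : Fin N → M, z = ∑ i, (⟨v i, hvmem i⟩ : a) ⊗ₜ[T] e i := by
    intro z
    induction z using TensorProduct.induction_on with
    | zero =>
        refine ⟨fun _ => 0, ?_⟩
        simp [TensorProduct.tmul_zero]
    | tmul x mm =>
        obtain ⟨x, hx⟩ := x
        rw [← hva] at hx
        obtain ⟨f, hf⟩ := (Submodule.mem_span_range_iff_exists_fun T).mp hx
        refine ⟨fun i => f i • mm, ?_⟩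
        have hx_eq : (⟨x, hva ▸ hx⟩ : a) = ∑ i, f i • (⟨v i, hvmem i⟩ : a) := by
          apply Subtype.ext
          rw [Submodule.coe_sum]
          simp only [SetLike.val_smul, smul_eq_mul]
          rw [← hf]
          rfl
        have : (⟨x, hva ▸ hx⟩ : a) ⊗ₜ[T] mm = ∑ i, (f i • (⟨v i, hvmem i⟩ : a)) ⊗ₜ[T] mm := by
          rw [hx_eq, TensorProduct.sum_tmul]
        rw [this]
        exact Finset.sum_congr rfl fun i _ => by
          rw [TensorProduct.smul_tmul]
    | add z1 z2 h1 h2 =>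
        obtain ⟨e1, he1⟩ := h1
        obtain ⟨e2, he2⟩ := h2
        refine ⟨fun i => e1 i + e2 i, ?_⟩
        rw [he1, he2, ← Finset.sum_add_distrib]
        exact Finset.sum_congr rfl fun i _ => (TensorProduct.tmul_add _ _ _).symm
  -- injectivity via trivial kernel
  rw [← LinearMap.ker_eq_bot, LinearMap.ker_eq_bot']
  intro z hz0
  obtain ⟨e, hze⟩ := hzrep z
  -- the sum relation in M
  have hsum : ∑ i, v i • e i = 0 := by
    have h1 : LinearMap.rTensor M (Submodule.subtype a) z = ∑ i, (v i) ⊗ₜ[T] (e i) := by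
      rw [hze, map_sum]
      exact Finset.sum_congr rfl fun i _ => by
        rw [LinearMap.rTensor_tmul]
        rfl
    have h2 := congrArg (TensorProduct.lid T M) (h1.symm.trans hz0)
    rw [map_zero, map_sum] at h2
    have h3 : ∀ i, (TensorProduct.lid T M) ((v i) ⊗ₜ[T] (e i)) = v i • e i := fun i =>
      TensorProduct.lid_tmul _ _
    rw [Finset.sum_congr rfl fun i _ => h3 i] at h2
    exact h2
  -- the linear maps ψ and Φ
  set ψ : (Fin N → T) →ₗ[T] M :=
    { toFun := fun vv => ∑ i, vv i • e i
      map_add' := fun aa bb => by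
        simp only [Pi.add_apply, add_smul]
        rw [Finset.sum_add_distrib]
      map_smul' := fun r vv => by
        simp only [Pi.smul_apply, smul_eq_mul, RingHom.id_apply]
        rw [Finset.smul_sum]
        exact Finset.sum_congr rfl fun i _ => by rw [mul_smul] } with hψ
  have hψ_apply : ∀ vv, ψ vv = ∑ i, vv i • e i := fun vv => rfl
  set M1 : Matrix (Fin N) (Fin N) T := Matrix.of (fun j i => π (d i j)) with hM1
  set M2 : Matrix (Fin m) (Fin N) T := Matrix.of (fun l i => π (d i (Fin.natAdd n l))) with hM2
  set Φ : (Fin N → T) →ₗ[T] ((Fin N → T) × (Fin m → T)) :=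
    ((LinearMap.id : (Fin N → T) →ₗ[T] (Fin N → T)) - M1.mulVecLin).prod M2.mulVecLin with hΦ
  have hΦ1 : ∀ vv j, (Φ vv).1 j = vv j - ∑ i, π (d i j) * vv i := by
    intro vv j
    show ((LinearMap.id : (Fin N → T) →ₗ[T] (Fin N → T)) - M1.mulVecLin) vv j = _
    simp only [LinearMap.sub_apply, LinearMap.id_apply, Pi.sub_apply, Matrix.mulVecLin_apply]
    congr 1
  have hΦ2 : ∀ vv l, (Φ vv).2 l = ∑ i, π (d i (Fin.natAdd n l)) * vv i := by
    intro vv l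
    show M2.mulVecLin vv l = _
    simp only [Matrix.mulVecLin_apply]
    simp [Matrix.mulVec, dotProduct, hM2]
    rfl
  -- kernel of Φ is in kernel of ψ
  have hkerincl : LinearMap.ker Φ ≤ LinearMap.ker ψ := by
    intro vv hvv
    rw [LinearMap.mem_ker] at hvv ⊢
    choose xx hxx using fun i => hsur (vv i)
    have hxa : ∀ j, xx j - (∑ i, d i j * xx i) ∈ Ideal.span (Set.range g) := by
      intro j
      rw [hg']
      rw [RingHom.mem_ker]
      rw [map_sub, map_sum]
      have : ∀ i, π (d i j * xx i) = π (d i j) * vv i := fun i => by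
        rw [map_mul, hxx]
      rw [Finset.sum_congr rfl fun i _ => this i, hxx]
      have := congrArg (fun p => p.1 j) hvv
      simp only [Prod.fst_zero, Pi.zero_apply] at this
      rw [hΦ1 vv j] at this
      exact this
    have hxb : ∀ l, (∑ i, d i (Fin.natAdd n l) * xx i) ∈ Ideal.span (Set.range g) := by
      intro l
      rw [hg', RingHom.mem_ker, map_sum]
      have : ∀ i, π (d i (Fin.natAdd n l) * xx i) = π (d i (Fin.natAdd n l)) * vv i := fun i => by
        rw [map_mul, hxx]
      rw [Finset.sum_congr rfl fun i _ => this i]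
      have := congrArg (fun p => p.2 l) hvv
      simp only [Prod.snd_zero, Pi.zero_apply] at this
      rw [hΦ2 vv l] at this
      exact this
    obtain ⟨s, hs⟩ := hKC xx hxa hxb
    have hvv_eq : ∀ i, vv i = π s * v i := by
      intro i
      have : π (xx i - s * C i) = 0 := by
        rw [← RingHom.mem_ker, ← hg']
        exact hs i
      rw [map_sub, map_mul, sub_eq_zero, hxx] at this
      rw [this, hvdef]
    rw [hψ_apply]
    rw [Finset.sum_congr rfl fun i _ => by rw [hvv_eq i, mul_smul]]
    rw [← Finset.smul_sum, hsum, smul_zero]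
  -- factor ψ through Φ using injectivity of M
  set ι0 : ((Fin N → T) ⧸ LinearMap.ker Φ) →ₗ[T] ((Fin N → T) × (Fin m → T)) :=
    Submodule.liftQ _ Φ (le_refl _) with hι0
  have hι0_inj : Function.Injective ι0 := by
    rw [← LinearMap.ker_eq_bot]
    exact Submodule.ker_liftQ_eq_bot _ _ _ (le_refl _)
  set g0 : ((Fin N → T) ⧸ LinearMap.ker Φ) →ₗ[T] M :=
    Submodule.liftQ _ ψ hkerincl with hg0
  obtain ⟨h, hh⟩ := hinj.out ι0 hι0_inj g0
  have hfact : ∀ vv, h (Φ vv) = ψ vv := by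
    intro vv
    have := hh (Submodule.Quotient.mk vv)
    rwa [hι0, Submodule.liftQ_apply, hg0, Submodule.liftQ_apply] at this
  -- single decompositions
  have hfunN : ∀ (vv : Fin N → T), ∑ j, vv j • (Pi.single j (1:T) : Fin N → T) = vv := by
    intro vv
    have : ∀ j, vv j • (Pi.single j (1:T) : Fin N → T) = Pi.single j (vv j) := fun j => by
      rw [← Pi.single_smul, smul_eq_mul, mul_one]
    rw [Finset.sum_congr rfl fun j _ => this j, Finset.univ_sum_single]
  have hfunM : ∀ (ww : Fin m → T), ∑ l, ww l • (Pi.single l (1:T) : Fin m → T) = ww := by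
    intro ww
    have : ∀ l, ww l • (Pi.single l (1:T) : Fin m → T) = Pi.single l (ww l) := fun l => by
      rw [← Pi.single_smul, smul_eq_mul, mul_one]
    rw [Finset.sum_congr rfl fun l _ => this l, Finset.univ_sum_single]
  have hpair : ∀ (vv : Fin N → T) (ww : Fin m → T),
      ((vv, ww) : (Fin N → T) × (Fin m → T))
        = (∑ j, vv j • (((Pi.single j (1:T) : Fin N → T), (0 : Fin m → T))
            : (Fin N → T) × (Fin m → T)))
          + ∑ l, ww l • (((0 : Fin N → T), (Pi.single l (1:T) : Fin m → T))
            : (Fin N → T) × (Fin m → T)) := by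
    intro vv ww
    apply Prod.ext
    · simp only [Prod.fst_add, Prod.fst_sum, Prod.smul_fst]
      rw [hfunN vv]
      simp
    · simp only [Prod.snd_add, Prod.snd_sum, Prod.smul_snd]
      rw [hfunM ww]
      simp
  set F : Fin N → M := fun j => h ((Pi.single j (1:T) : Fin N → T), (0 : Fin m → T)) with hF
  set F' : Fin m → M := fun l => h ((0 : Fin N → T), (Pi.single l (1:T) : Fin m → T)) with hF'
  -- expression for e i
  have hsingle_sumT : ∀ (w : Fin N → T) (i : Fin N), ∑ i', w i' * (Pi.single i (1:T) : Fin N → T) i' = w i := by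
    intro w i
    simp [Pi.single_apply, mul_ite]
  have hψ_single : ∀ i, ψ (Pi.single i (1:T)) = e i := by
    intro i
    rw [hψ_apply]
    simp [Pi.single_apply, ite_smul]
  have hΦ_single : ∀ i, Φ (Pi.single i (1:T))
      = ((fun j => (Pi.single i (1:T) : Fin N → T) j - π (d i j)),
          (fun l => π (d i (Fin.natAdd n l)))) := by
    intro i
    apply Prod.ext
    · funext j
      rw [hΦ1]
      congr 1
      exact hsingle_sumT (fun i' => π (d i' j)) i
    · funext l
      rw [hΦ2]
      exact hsingle_sumT (fun i' => π (d i' (Fin.natAdd n l))) i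
  have he : ∀ i, e i = (∑ j, ((Pi.single i (1:T) : Fin N → T) j - π (d i j)) • F j)
      + ∑ l, π (d i (Fin.natAdd n l)) • F' l := by
    intro i
    rw [← hψ_single i, ← hfact, hΦ_single i]
    rw [hpair]
    rw [map_add, map_sum, map_sum]
    congr 1
    · exact Finset.sum_congr rfl fun j _ => by rw [map_smul, hF]
    · exact Finset.sum_congr rfl fun l _ => by rw [map_smul, hF']
  -- final computation: z = 0
  rw [hze]
  rw [Finset.sum_congr rfl fun i _ => by rw [he i]]
  rw [Finset.sum_congr rfl fun i (_ : i ∈ Finset.univ) =>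
    TensorProduct.tmul_add (⟨v i, hvmem i⟩ : a) _ _]
  rw [Finset.sum_add_distrib]
  have hz1 : ∑ i, (⟨v i, hvmem i⟩ : a) ⊗ₜ[T]
      (∑ j, ((Pi.single i (1:T) : Fin N → T) j - π (d i j)) • F j) = 0 := by
    have step : ∀ i, (⟨v i, hvmem i⟩ : a) ⊗ₜ[T]
        (∑ j, ((Pi.single i (1:T) : Fin N → T) j - π (d i j)) • F j)
        = ∑ j, (((Pi.single i (1:T) : Fin N → T) j - π (d i j)) • (⟨v i, hvmem i⟩ : a)) ⊗ₜ[T] F j := by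
      intro i
      rw [TensorProduct.tmul_sum]
      exact Finset.sum_congr rfl fun j _ => by rw [← TensorProduct.smul_tmul]
    rw [Finset.sum_congr rfl fun i _ => step i, Finset.sum_comm]
    refine Finset.sum_eq_zero fun j _ => ?_
    rw [← TensorProduct.sum_tmul]
    have hcoef : (∑ i, ((Pi.single i (1:T) : Fin N → T) j - π (d i j)) • (⟨v i, hvmem i⟩ : a)) = 0 := by
      apply Subtype.ext
      rw [Submodule.coe_sum]
      simp only [SetLike.val_smul, smul_eq_mul]
      have : ∀ i, ((Pi.single i (1:T) : Fin N → T) j - π (d i j)) * v i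
          = (Pi.single i (1:T) : Fin N → T) j * v i - π (d i j) * v i := fun i => by ring
      rw [Finset.sum_congr rfl fun i _ => this i, Finset.sum_sub_distrib]
      rw [hrel j]
      have : ∑ i, (Pi.single i (1:T) : Fin N → T) j * v i = v j := by
        simp [Pi.single_apply, ite_mul]
      rw [this, sub_self]
      rfl
    rw [hcoef, TensorProduct.zero_tmul]
  have hz2 : ∑ i, (⟨v i, hvmem i⟩ : a) ⊗ₜ[T] (∑ l, π (d i (Fin.natAdd n l)) • F' l) = 0 := by
    have step : ∀ i, (⟨v i, hvmem i⟩ : a) ⊗ₜ[T] (∑ l, π (d i (Fin.natAdd n l)) • F' l)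
        = ∑ l, ((π (d i (Fin.natAdd n l))) • (⟨v i, hvmem i⟩ : a)) ⊗ₜ[T] F' l := by
      intro i
      rw [TensorProduct.tmul_sum]
      exact Finset.sum_congr rfl fun l _ => by rw [← TensorProduct.smul_tmul]
    rw [Finset.sum_congr rfl fun i _ => step i, Finset.sum_comm]
    refine Finset.sum_eq_zero fun l _ => ?_
    rw [← TensorProduct.sum_tmul]
    have hcoef : (∑ i, (π (d i (Fin.natAdd n l))) • (⟨v i, hvmem i⟩ : a)) = 0 := by
      apply Subtype.ext
      rw [Submodule.coe_sum]
      simp only [SetLike.val_smul, smul_eq_mul]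
      rw [hrel2 l]
      rfl
    rw [hcoef, TensorProduct.zero_tmul]
  rw [hz1, hz2, add_zero]

end Forward

/-- Transfer of the double-annihilator property along a surjection. -/
theorem mem_span_sup_of_ann {D : Type u} [CommRing D] {T : Type u} [CommRing T]
    (π : D →+* T) (hsur : Function.Surjective π) (hIF : IsIFRing T)
    {k : ℕ} (x : Fin k → D) (w : D)
    (hw : ∀ u : D, (∀ i, u * x i ∈ RingHom.ker π) → u * w ∈ RingHom.ker π) :
    w ∈ Ideal.span (Set.range x) ⊔ RingHom.ker π := by
  have h := mem_span_of_ann hIF (fun i => π (x i)) (π w) ?_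
  · have hcomp : (fun i => π (x i)) = ⇑π ∘ x := rfl
    have himg : Ideal.span (Set.range (fun i => π (x i)))
        = Ideal.map π (Ideal.span (Set.range x)) := by
      rw [Ideal.map_span, hcomp, Set.range_comp]
    rw [himg] at h
    have h2 : w ∈ Ideal.comap π (Ideal.map π (Ideal.span (Set.range x))) := h
    rwa [Ideal.comap_map_of_surjective π hsur, ← RingHom.ker_eq_comap_bot] at h2
  · intro ub hub
    obtain ⟨u, rfl⟩ := hsur ub
    rw [← map_mul, ← RingHom.mem_ker]
    apply hw
    intro i
    rw [RingHom.mem_ker, map_mul]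
    exact hub i

/-- For a φ-ring `R`, the quotient `R/Nil(R)` is a Prüfer domain if
and only if `R/I` is an IF ring for every finitely generated nonnil ideal `I` of `R`. -/
theorem quotient_prufer_iff_quotients_IF (R : Type u) [CommRing R] (hR : IsPhiRing R) :
    IsPruferDomain (R ⧸ nilradical R) ↔
      ∀ I : Ideal R, I.FG → ¬ I ≤ nilradical R → IsIFRing (R ⧸ I) := by
  classical
  haveI hprime : (nilradical R).IsPrime := hR.1
  haveI : IsDomain (R ⧸ nilradical R) := Ideal.Quotient.isDomain (nilradical R)
  have hker_eq : ∀ (I : Ideal R) (hnle : nilradical R ≤ I),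
      RingHom.ker (Ideal.Quotient.factor hnle)
        = Ideal.map (Ideal.Quotient.mk (nilradical R)) I := by
    intro I hnle
    ext y
    obtain ⟨r, rfl⟩ := Ideal.Quotient.mk_surjective y
    rw [RingHom.mem_ker, Ideal.Quotient.factor_mk, Ideal.Quotient.eq_zero_iff_mem]
    constructor
    · intro hr
      exact Ideal.mem_map_of_mem _ hr
    · intro hr
      rw [Ideal.mem_map_iff_of_surjective _ Ideal.Quotient.mk_surjective] at hr
      obtain ⟨y', hy', heq⟩ := hr
      have : y' - r ∈ nilradical R := by
        rw [← Ideal.Quotient.mk_eq_mk_iff_sub_mem]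
        exact heq
      have : y' - r ∈ I := hnle this
      have : r = y' - (y' - r) := by ring
      rw [this]
      exact Ideal.sub_mem _ hy' ‹y' - r ∈ I›
  have hfactor_sur : ∀ (I : Ideal R) (hnle : nilradical R ≤ I),
      Function.Surjective (Ideal.Quotient.factor hnle) := by
    intro I hnle y
    obtain ⟨r, rfl⟩ := Ideal.Quotient.mk_surjective y
    exact ⟨Ideal.Quotient.mk (nilradical R) r, Ideal.Quotient.factor_mk _ _⟩
  constructor
  · -- Prüfer ⇒ quotients IF
    intro hP I hIfg hInn
    obtain ⟨x, hxI, hxn⟩ := SetLike.not_le_iff_exists.mp hInn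
    have hnle : nilradical R ≤ I :=
      le_trans (hR.2 x hxn) ((Ideal.span_singleton_le_iff_mem I).mpr hxI)
    set π := Ideal.Quotient.factor hnle with hπ
    have hkfg : (RingHom.ker π).FG := by
      rw [hker_eq I hnle]
      exact Ideal.FG.map hIfg _
    have hkne : RingHom.ker π ≠ ⊥ := by
      rw [hker_eq I hnle]
      intro hbot
      rw [Ideal.map_eq_bot_iff_le_ker, Ideal.mk_ker] at hbot
      exact hInn hbot
    exact isIFRing_of_surjective_of_prufer hP π (hfactor_sur I hnle) hkfg hkne
  · -- quotients IF ⇒ Prüfer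
    intro hIF
    have hH : AnnHyp (R ⧸ nilradical R) := by
      intro J hJfg hJne k x w hw
      obtain ⟨kg, gb, hgb⟩ := Submodule.fg_iff_exists_fin_generating_family.mp hJfg
      have hgb' : Ideal.span (Set.range gb) = J := hgb
      choose G hG using fun l => Ideal.Quotient.mk_surjective (I := nilradical R) (gb l)
      set I : Ideal R := Ideal.span (Set.range G) with hI
      have hIfg : I.FG := Submodule.fg_span (Set.finite_range G)
      have hmap : Ideal.map (Ideal.Quotient.mk (nilradical R)) I = J := by
        rw [hI, Ideal.map_span, ← Set.range_comp]
        rw [show (⇑(Ideal.Quotient.mk (nilradical R)) ∘ G) = gb from funext hG]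
        exact hgb'
      have hInn : ¬ I ≤ nilradical R := by
        intro hle
        apply hJne
        rw [← hmap, ← le_bot_iff]
        calc Ideal.map (Ideal.Quotient.mk (nilradical R)) I
            ≤ Ideal.map (Ideal.Quotient.mk (nilradical R)) (nilradical R) :=
              Ideal.map_mono hle
        _ = ⊥ := Ideal.map_quotient_self _
      obtain ⟨x0, hx0I, hx0n⟩ := SetLike.not_le_iff_exists.mp hInn
      have hnle : nilradical R ≤ I :=
        le_trans (hR.2 x0 hx0n) ((Ideal.span_singleton_le_iff_mem I).mpr hx0I)
      set π := Ideal.Quotient.factor hnle with hπ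
      have hkerJ : RingHom.ker π = J := by rw [hker_eq I hnle, hmap]
      have := mem_span_sup_of_ann π (hfactor_sur I hnle) (hIF I hIfg hInn) x w
        (by rw [hkerJ]; exact hw)
      rwa [hkerJ] at this
    exact hH.isPrufer
end
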